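/- arXiv:2301.09192 — 8 statements merged into one kernel-verified Lean document; each statement's English description precedes it below -/
import Mathlib

section
/- For every n ≥ 1 (with d = 2^n) and every ε with 0 < ε ≤ 1/4, there exist an integer M with M ≥ exp(d²/16) and sign vectors α₁, …, α_M : 𝒫ₙ → {−1, +1}, each satisfying Σ_{P∈𝒫ₙ} α_x(P) = 0, such that the probability distributions p_x on 𝒫ₙ defined by p_x(P) = (1 + 4 α_x(P) ε)/d² are pairwise ε-separated: TV(p_x, p_y) ≥ ε for all x ≠ y in {1, …, M}. -/
/-- Geometric-style bound on partial sums of binomial coefficients. -/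
lemma aux_sum_choose (N : ℕ) : ∀ k, 4 * k ≤ N →
    2 * ∑ i ∈ Finset.range k, N.choose i ≤ N.choose k := by
  intro k
  induction k with
  | zero => simp
  | succ k ih =>
    intro h
    have ih' := ih (by omega)
    rw [Finset.sum_range_succ]
    have key : 3 * N.choose k ≤ N.choose (k + 1) := by
      have hm := Nat.choose_succ_right_eq N k
      have h2 : 3 * N.choose k * (k + 1) ≤ N.choose (k + 1) * (k + 1) := by
        rw [hm]
        have h3 : 3 * (k + 1) ≤ N - k := by omega
        calc 3 * N.choose k * (k + 1) = N.choose k * (3 * (k + 1)) := by ring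
          _ ≤ N.choose k * (N - k) := Nat.mul_le_mul_left _ h3
      exact Nat.le_of_mul_le_mul_right h2 (by omega)
    omega

/-- Ratio growth of binomial coefficients below `3N/8`. -/
lemma aux_choose_ratio (N k : ℕ) : ∀ j, 8 * (k + j) ≤ 3 * N + 3 →
    5 ^ j * N.choose k ≤ 3 ^ j * N.choose (k + j) := by
  intro j
  induction j with
  | zero => simp
  | succ j ih =>
    intro h
    have ih' := ih (by omega)
    have key : 5 * N.choose (k + j) ≤ 3 * N.choose (k + j + 1) := by
      have hm := Nat.choose_succ_right_eq N (k + j)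
      have h2 : 5 * N.choose (k + j) * (k + j + 1) ≤ 3 * N.choose (k + j + 1) * (k + j + 1) := by
        have h3 : 5 * (k + j + 1) ≤ 3 * (N - (k + j)) := by omega
        calc 5 * N.choose (k + j) * (k + j + 1) = N.choose (k + j) * (5 * (k + j + 1)) := by ring
          _ ≤ N.choose (k + j) * (3 * (N - (k + j))) := Nat.mul_le_mul_left _ h3
          _ = 3 * (N.choose (k + j) * (N - (k + j))) := by ring
          _ = 3 * (N.choose (k + j + 1) * (k + j + 1)) := by rw [hm]
          _ = 3 * N.choose (k + j + 1) * (k + j + 1) := by ring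
      exact Nat.le_of_mul_le_mul_right h2 (by omega)
    calc 5 ^ (j + 1) * N.choose k = 5 * (5 ^ j * N.choose k) := by ring
      _ ≤ 5 * (3 ^ j * N.choose (k + j)) := Nat.mul_le_mul_left _ ih'
      _ = 3 ^ j * (5 * N.choose (k + j)) := by ring
      _ ≤ 3 ^ j * (3 * N.choose (k + j + 1)) := Nat.mul_le_mul_left _ key
      _ = 3 ^ (j + 1) * N.choose (k + (j + 1)) := by ring_nf

/-- Hamming balls (w.r.t. symmetric difference) have at most the volume
`∑_{i<k} C(N,i)`. -/
lemma aux_ball_card {ι : Type*} [Fintype ι] [DecidableEq ι] (T : Finset ι) (k : ℕ) :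
    ((Finset.univ : Finset (Finset ι)).filter fun S => (symmDiff S T).card < k).card
      ≤ ∑ i ∈ Finset.range k, (Fintype.card ι).choose i := by
  classical
  have h1 : ((Finset.univ : Finset (Finset ι)).filter fun S => (symmDiff S T).card < k).card
      ≤ ((Finset.univ : Finset (Finset ι)).filter fun S => S.card < k).card := by
    apply Finset.card_le_card_of_injOn (fun S => symmDiff S T)
    · intro S hS
      simp only [Finset.mem_coe, Finset.mem_filter, Finset.mem_univ, true_and] at hS ⊢
      exact hS
    · intro a _ b _ hab
      have := congrArg (fun S => symmDiff S T) hab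
      simpa [symmDiff_symmDiff_cancel_right] using this
  refine h1.trans ?_
  have h2 : ((Finset.univ : Finset (Finset ι)).filter fun S => S.card < k)
      ⊆ (Finset.range k).biUnion fun i => Finset.powersetCard i Finset.univ := by
    intro S hS
    simp only [Finset.mem_filter, Finset.mem_univ, true_and] at hS
    exact Finset.mem_biUnion.2 ⟨S.card, Finset.mem_range.2 hS,
      Finset.mem_powersetCard_univ.2 rfl⟩
  refine (Finset.card_le_card h2).trans ?_
  refine Finset.card_biUnion_le.trans ?_
  refine Finset.sum_le_sum fun i _ => ?_
  rw [Finset.card_powersetCard, Finset.card_univ]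

/-- `(2^n)^2 = 4^n` over `ℝ`. -/
lemma hDN (n : ℕ) : ((2:ℝ) ^ n) ^ 2 = ((4 ^ n : ℕ) : ℝ) := by
  push_cast
  rw [← pow_mul, show (4:ℝ) = 2 ^ 2 by norm_num, ← pow_mul, mul_comm]

set_option maxHeartbeats 1000000 in
/-- existence of an `ε`-separated family of at least `exp(d²/16)` sign-vector
Pauli-channel distributions `p_x(P) = (1 + 4 α_x(P) ε)/d²` on the set `𝒫ₙ ≃ (Fin n → Fin 4)`
of `n`-qubit Pauli operators, where each `α_x` takes values in `{-1, 1}` and sums to `0`,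
and `TV(p_x, p_y) ≥ ε` for `x ≠ y`. -/
theorem stmt_0 (n : ℕ) (hn : 1 ≤ n) (ε : ℝ) (hε : 0 < ε) (hε' : ε ≤ 1 / 4) :
    ∃ (M : ℕ) (α : Fin M → (Fin n → Fin 4) → ℝ),
      Real.exp ((2 ^ n : ℝ) ^ 2 / 16) ≤ (M : ℝ) ∧
      (∀ x P, α x P = 1 ∨ α x P = -1) ∧
      (∀ x, ∑ P : Fin n → Fin 4, α x P = 0) ∧
      (∀ x y : Fin M, x ≠ y →
        ε ≤ (1 / 2) * ∑ P : Fin n → Fin 4,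
          |(1 + 4 * α x P * ε) / (2 ^ n : ℝ) ^ 2 -
            (1 + 4 * α y P * ε) / (2 ^ n : ℝ) ^ 2|) := by
  classical
  set ι := (Fin n → Fin 4) with hι
  set N : ℕ := 4 ^ n with hN
  set k : ℕ := 4 ^ n / 4 with hk
  set m : ℕ := 4 ^ n / 2 with hm
  have hNcard : Fintype.card ι = N := by simp [hι, hN]
  have hN4 : 4 ≤ N := by
    calc 4 = 4 ^ 1 := by norm_num
      _ ≤ 4 ^ n := Nat.pow_le_pow_right (by norm_num) hn
  have hk4 : 4 * k = N := by
    rw [hk, hN]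
    obtain ⟨n', rfl⟩ : ∃ n', n = n' + 1 := ⟨n - 1, by omega⟩
    rw [pow_succ]
    omega
  have hm2 : 2 * m = N := by
    rw [hm, hN]
    obtain ⟨n', rfl⟩ : ∃ n', n = n' + 1 := ⟨n - 1, by omega⟩
    rw [pow_succ]
    omega
  have hkpos : 0 < k := by omega
  -- the "good code" predicate
  set good : Finset (Finset ι) → Prop := fun C =>
    (∀ S ∈ C, S.card = m) ∧ ∀ S ∈ C, ∀ T ∈ C, S ≠ T → k ≤ (symmDiff S T).card with hgood
  -- a maximal good code
  obtain ⟨C, hCgood, hCmax⟩ : ∃ C, good C ∧ ∀ C', good C' → C'.card ≤ C.card := by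
    obtain ⟨C, hC, hmax⟩ := Finset.exists_max_image
      ((Finset.univ : Finset (Finset (Finset ι))).filter good) Finset.card
      ⟨∅, by simp [hgood]⟩
    refine ⟨C, (Finset.mem_filter.1 hC).2, fun C' hC' => hmax C' ?_⟩
    exact Finset.mem_filter.2 ⟨Finset.mem_univ _, hC'⟩
  -- covering property from maximality
  have hcover : ∀ S : Finset ι, S.card = m → ∃ T ∈ C, (symmDiff S T).card < k := by
    intro S hS
    by_cases hSC : S ∈ C
    · exact ⟨S, hSC, by simpa [symmDiff_self] using hkpos⟩
    by_contra hno
    push_neg at hno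
    have hins : good (insert S C) := by
      constructor
      · intro S' hS'
        rcases Finset.mem_insert.1 hS' with rfl | h'
        · exact hS
        · exact hCgood.1 _ h'
      · intro A hA B hB hAB
        rcases Finset.mem_insert.1 hA with rfl | hA' <;>
          rcases Finset.mem_insert.1 hB with rfl | hB'
        · exact absurd rfl hAB
        · exact hno B hB'
        · rw [symmDiff_comm]; exact hno A hA'
        · exact hCgood.2 A hA' B hB' hAB
    have := hCmax _ hins
    rw [Finset.card_insert_of_notMem hSC] at this
    omega
  set M : ℕ := C.card with hM
  -- counting: C(N,m) ≤ M * Vol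
  have hcount : N.choose m ≤ M * ∑ i ∈ Finset.range k, N.choose i := by
    have hsub : Finset.powersetCard m (Finset.univ : Finset ι) ⊆
        C.biUnion fun T => Finset.univ.filter fun S => (symmDiff S T).card < k := by
      intro S hS
      obtain ⟨T, hT, hTd⟩ := hcover S (Finset.mem_powersetCard_univ.1 hS)
      exact Finset.mem_biUnion.2 ⟨T, hT, Finset.mem_filter.2 ⟨Finset.mem_univ _, hTd⟩⟩
    calc N.choose m = (Finset.powersetCard m (Finset.univ : Finset ι)).card := by
          rw [Finset.card_powersetCard, Finset.card_univ, hNcard]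
      _ ≤ (C.biUnion fun T => Finset.univ.filter fun S => (symmDiff S T).card < k).card :=
          Finset.card_le_card hsub
      _ ≤ ∑ T ∈ C, (Finset.univ.filter fun S => (symmDiff S T).card < k).card :=
          Finset.card_biUnion_le
      _ ≤ ∑ _T ∈ C, ∑ i ∈ Finset.range k, N.choose i :=
          Finset.sum_le_sum fun T _ => le_of_le_of_eq (aux_ball_card T k) (by rw [hNcard])
      _ = M * ∑ i ∈ Finset.range k, N.choose i := by
          rw [Finset.sum_const, smul_eq_mul, hM]
  have hvol : 2 * ∑ i ∈ Finset.range k, N.choose i ≤ N.choose k :=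
    aux_sum_choose N k (by omega)
  have hnat : 2 * N.choose m ≤ M * N.choose k := by
    calc 2 * N.choose m ≤ 2 * (M * ∑ i ∈ Finset.range k, N.choose i) := by
          exact Nat.mul_le_mul_left _ hcount
      _ = M * (2 * ∑ i ∈ Finset.range k, N.choose i) := by ring
      _ ≤ M * N.choose k := Nat.mul_le_mul_left _ hvol
  set j : ℕ := N / 8 with hj
  have hratio : 5 ^ j * N.choose k ≤ 3 ^ j * N.choose m := by
    have h1 : 5 ^ j * N.choose k ≤ 3 ^ j * N.choose (k + j) :=
      aux_choose_ratio N k j (by omega)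
    have h2 : N.choose (k + j) ≤ N.choose m := by
      have := Nat.choose_le_middle (k + j) N
      have hNm : N / 2 = m := by omega
      rwa [hNm] at this
    exact h1.trans (Nat.mul_le_mul_left _ h2)
  -- transfer to the reals
  have hckpos : 0 < N.choose k := Nat.choose_pos (by omega)
  have hckposR : (0:ℝ) < (N.choose k : ℝ) := by exact_mod_cast hckpos
  have e2 : ((5:ℝ)/3) ^ j * (N.choose k : ℝ) ≤ (N.choose m : ℝ) := by
    have h5 : ((5:ℝ)) ^ j * (N.choose k : ℝ) ≤ (3:ℝ) ^ j * (N.choose m : ℝ) := by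
      exact_mod_cast hratio
    have h3pos : (0:ℝ) < (3:ℝ) ^ j := by positivity
    rw [div_pow, div_mul_eq_mul_div, div_le_iff₀ h3pos]
    calc (5:ℝ) ^ j * (N.choose k : ℝ) ≤ (3:ℝ) ^ j * (N.choose m : ℝ) := h5
      _ = (N.choose m : ℝ) * (3:ℝ) ^ j := by ring
  have e6 : 2 * (N.choose m : ℝ) ≤ (M : ℝ) * (N.choose k : ℝ) := by exact_mod_cast hnat
  have e1 : Real.exp ((N : ℝ) / 16) ≤ 2 * ((5:ℝ)/3) ^ j := by
    rcases eq_or_lt_of_le hn with h1 | h2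
    · -- n = 1 : N = 4, j = 0, exp(1/4) ≤ 2
      have hn1 : n = 1 := h1.symm
      have hN4' : N = 4 := by rw [hN, hn1]; norm_num
      have hj0 : j = 0 := by rw [hj, hN4']
      rw [hN4', hj0]
      norm_num
      have h14 : ((4:ℝ)/16) = 1/4 := by norm_num
      have hexp : Real.exp (4/16 : ℝ) ^ 4 = Real.exp 1 := by
        rw [← Real.exp_nat_mul]; norm_num
      nlinarith [Real.exp_one_lt_d9, Real.exp_pos (4/16 : ℝ),
        sq_nonneg (Real.exp (4/16 : ℝ)), sq_nonneg (Real.exp (4/16 : ℝ) - 1),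
        sq_nonneg (Real.exp (4/16 : ℝ) ^ 2)]
    · -- n ≥ 2 : 8 ∣ N and exp(1/2) ≤ 5/3
      have h8 : 8 * j = N := by
        rw [hj, hN]
        obtain ⟨n', rfl⟩ : ∃ n', n = n' + 2 := ⟨n - 2, by omega⟩
        rw [pow_succ, pow_succ]
        omega
      have hNj : (N : ℝ) / 16 = (j : ℝ) * (1/2) := by
        have : (N : ℝ) = 8 * (j : ℝ) := by exact_mod_cast h8.symm
        rw [this]; ring
      have hhalf : Real.exp (1/2 : ℝ) ≤ 5/3 := by
        have hsq : Real.exp (1/2 : ℝ) * Real.exp (1/2 : ℝ) = Real.exp 1 := by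
          rw [← Real.exp_add]; norm_num
        nlinarith [Real.exp_one_lt_d9, Real.exp_pos (1/2 : ℝ)]
      calc Real.exp ((N : ℝ) / 16) = Real.exp (1/2 : ℝ) ^ j := by
            rw [hNj, ← Real.exp_nat_mul]
        _ ≤ ((5:ℝ)/3) ^ j := pow_le_pow_left₀ (le_of_lt (Real.exp_pos _)) hhalf j
        _ ≤ 2 * ((5:ℝ)/3) ^ j := by nlinarith [pow_pos (show (0:ℝ) < 5/3 by norm_num) j]
  have hMbound : Real.exp ((N : ℝ) / 16) ≤ (M : ℝ) := by
    have chain : Real.exp ((N : ℝ) / 16) * (N.choose k : ℝ) ≤ (M : ℝ) * (N.choose k : ℝ) := by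
      calc Real.exp ((N : ℝ) / 16) * (N.choose k : ℝ)
          ≤ (2 * ((5:ℝ)/3) ^ j) * (N.choose k : ℝ) := by
            exact mul_le_mul_of_nonneg_right e1 (le_of_lt hckposR)
        _ = 2 * (((5:ℝ)/3) ^ j * (N.choose k : ℝ)) := by ring
        _ ≤ 2 * (N.choose m : ℝ) := by nlinarith
        _ ≤ (M : ℝ) * (N.choose k : ℝ) := e6
    exact le_of_mul_le_mul_right chain hckposR
  -- construct the family
  set Sx : Fin M → Finset ι := fun x => ((C.equivFin.symm x : C) : Finset ι) with hSx
  have hSxC : ∀ x, Sx x ∈ C := fun x => (C.equivFin.symm x).2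
  have hSxinj : Function.Injective Sx := by
    intro a b hab
    have : (C.equivFin.symm a : C) = (C.equivFin.symm b : C) := Subtype.ext hab
    exact C.equivFin.symm.injective this
  refine ⟨M, fun x P => if P ∈ Sx x then 1 else -1, ?_, ?_, ?_, ?_⟩
  · -- size lower bound
    rw [hDN n]
    exact hMbound
  · intro x P
    by_cases h : P ∈ Sx x <;> simp [h]
  · -- sum is zero
    intro x
    have hcardx : (Sx x).card = m := hCgood.1 _ (hSxC x)
    have hsplit : ∀ P : ι, (if P ∈ Sx x then (1:ℝ) else -1)
        = 2 * (if P ∈ Sx x then (1:ℝ) else 0) - 1 := by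
      intro P; split <;> norm_num
    rw [Finset.sum_congr rfl fun P _ => hsplit P, Finset.sum_sub_distrib,
      ← Finset.mul_sum, Finset.sum_ite_mem, Finset.univ_inter, Finset.sum_const,
      Finset.sum_const, Finset.card_univ, hNcard, hcardx]
    have : (2:ℝ) * m = N := by exact_mod_cast hm2
    simp only [smul_eq_mul, mul_one, nsmul_eq_mul]
    linarith
  · -- TV separation
    intro x y hxy
    have hST : Sx x ≠ Sx y := fun h => hxy (hSxinj h)
    have hdist : k ≤ (symmDiff (Sx x) (Sx y)).card :=
      hCgood.2 _ (hSxC x) _ (hSxC y) hST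
    set D : ℝ := ((2:ℝ) ^ n) ^ 2 with hD
    have hDval : D = (N : ℝ) := by rw [hD, hN]; exact hDN n
    have hDpos : 0 < D := by rw [hDval]; positivity
    have hterm : ∀ P : ι,
        |(1 + 4 * (if P ∈ Sx x then (1:ℝ) else -1) * ε) / D -
          (1 + 4 * (if P ∈ Sx y then (1:ℝ) else -1) * ε) / D|
        = if P ∈ symmDiff (Sx x) (Sx y) then 8 * ε / D else 0 := by
      intro P
      by_cases h1 : P ∈ Sx x <;> by_cases h2 : P ∈ Sx y
      · have hs : P ∉ symmDiff (Sx x) (Sx y) := by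
          simp [Finset.mem_symmDiff, h1, h2]
        rw [if_pos h1, if_pos h2, if_neg hs]
        simp
      · have hs : P ∈ symmDiff (Sx x) (Sx y) := by
          simp [Finset.mem_symmDiff, h1, h2]
        rw [if_pos h1, if_neg h2, if_pos hs]
        have he : (1 + 4 * (1:ℝ) * ε) / D - (1 + 4 * (-1:ℝ) * ε) / D = 8 * ε / D := by
          field_simp; ring
        rw [he, abs_of_pos (by positivity)]
      · have hs : P ∈ symmDiff (Sx x) (Sx y) := by
          simp [Finset.mem_symmDiff, h1, h2]
        rw [if_neg h1, if_pos h2, if_pos hs]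
        have he : (1 + 4 * (-1:ℝ) * ε) / D - (1 + 4 * (1:ℝ) * ε) / D = -(8 * ε / D) := by
          field_simp; ring
        rw [he, abs_neg, abs_of_pos (by positivity)]
      · have hs : P ∉ symmDiff (Sx x) (Sx y) := by
          simp [Finset.mem_symmDiff, h1, h2]
        rw [if_neg h1, if_neg h2, if_neg hs]
        simp
    rw [Finset.sum_congr rfl fun P _ => hterm P, Finset.sum_ite_mem, Finset.univ_inter,
      Finset.sum_const, nsmul_eq_mul]
    have hkD : (k : ℝ) * 4 = D := by
      rw [hDval]
      have : 4 * k = N := hk4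
      exact_mod_cast by omega
    have hcard_ge : (k : ℝ) ≤ ((symmDiff (Sx x) (Sx y)).card : ℝ) := by exact_mod_cast hdist
    calc ε = (1/2) * ((k:ℝ) * (8 * ε / D)) := by
            field_simp
            nlinarith [hkD, hDpos]
      _ ≤ (1/2) * (((symmDiff (Sx x) (Sx y)).card : ℝ) * (8 * ε / D)) := by
            apply mul_le_mul_of_nonneg_left _ (by norm_num)
            exact mul_le_mul_of_nonneg_right hcard_ge (by positivity)
end

section
/- Let 𝒳, ℋ, 𝕀 be finite sets and let q be a probability mass function on 𝒳 × ℋ. Suppose given weights w : ℋ × 𝕀 → [0, ∞) with Σ_{i∈𝕀} w(h,i) = 1 for every h ∈ ℋ, and real numbers u : 𝒳 × ℋ × 𝕀 → ℝ satisfying |u(x,h,i)| ≤ 1/4 for all (x,h,i) and Σ_{i∈𝕀} w(h,i) u(x,h,i) = 0 for all x, h. Define the probability mass function q' on 𝒳 × ℋ × 𝕀 by q'(x,h,i) = q(x,h) · w(h,i) · (1 + u(x,h,i)). Then the conditional mutual information of q', namely Σ_{x,h,i} q'(x,h,i) · log[ q'(x,h,i) · q'(h) / (q'(x,h) · q'(h,i))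 ] (where q'(h) = Σ_{x,i} q'(x,h,i), q'(x,h) = Σ_i q'(x,h,i), q'(h,i) = Σ_x q'(x,h,i), and summands with q'(x,h,i) = 0 are read as 0), is at most 3 · Σ_{x,h} q(x,h) · Σ_{i∈𝕀} w(h,i) · u(x,h,i)². -/
private lemma aux1 (t : ℝ) (ht : -1 < t) : (1 + t) * Real.log (1 + t) ≤ t + t ^ 2 := by
  have h1 : Real.log (1 + t) ≤ t := by
    have := Real.log_le_sub_one_of_pos (show (0:ℝ) < 1 + t by linarith)
    linarith
  nlinarith [mul_le_mul_of_nonneg_left h1 (show (0:ℝ) ≤ 1 + t by linarith)]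

private lemma aux2 (a b : ℝ) (ha : 0 < a) (hb : 0 < b) :
    b - a ≤ b * (Real.log b - Real.log a) := by
  have h := Real.log_le_sub_one_of_pos (show (0:ℝ) < a / b by positivity)
  rw [Real.log_div ha.ne' hb.ne'] at h
  have h' : b * (Real.log a - Real.log b) ≤ b * (a / b - 1) :=
    mul_le_mul_of_nonneg_left h hb.le
  have h'' : b * (a / b - 1) = a - b := by field_simp
  nlinarith

/-- one-step bound on the conditional mutual information. For a pmf `q` on
`𝒳 × ℋ`, weights `w(h, ·)` summing to `1`, and relative deviations `u` with `|u| ≤ 1/4`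
and `∑ i, w h i * u x h i = 0`, the conditional mutual information of the pmf
`q'(x,h,i) = q(x,h) w(h,i) (1 + u(x,h,i))` is at most `3 ∑_{x,h} q(x,h) ∑_i w(h,i) u(x,h,i)²`.
(Summands with `q'(x,h,i) = 0` vanish since they are multiplied by `q'(x,h,i) = 0`.) -/
theorem stmt_1 {X H I : Type*} [Fintype X] [Fintype H] [Fintype I]
    (q : X → H → ℝ) (hq0 : ∀ x h, 0 ≤ q x h) (hq1 : ∑ x, ∑ h, q x h = 1)
    (w : H → I → ℝ) (hw0 : ∀ h i, 0 ≤ w h i) (hw1 : ∀ h, ∑ i, w h i = 1)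
    (u : X → H → I → ℝ) (hu : ∀ x h i, |u x h i| ≤ 1 / 4)
    (hu0 : ∀ x h, ∑ i, w h i * u x h i = 0) :
    (∑ x, ∑ h, ∑ i,
        (q x h * w h i * (1 + u x h i)) *
          Real.log ((q x h * w h i * (1 + u x h i)) *
              (∑ x', ∑ i', q x' h * w h i' * (1 + u x' h i')) /
            ((∑ i', q x h * w h i' * (1 + u x h i')) *
              (∑ x', q x' h * w h i * (1 + u x' h i)))))
      ≤ 3 * ∑ x, ∑ h, q x h * ∑ i, w h i * (u x h i) ^ 2 := by
  classical
  set Q : H → ℝ := fun h => ∑ x, q x h with hQdef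
  set S : H → I → ℝ := fun h i => ∑ x, q x h * u x h i with hSdef
  have hQ0 : ∀ h, 0 ≤ Q h := fun h => Finset.sum_nonneg fun x _ => hq0 x h
  have hQq : ∀ x h, q x h ≤ Q h := fun x h =>
    Finset.single_le_sum (fun x _ => hq0 x h) (Finset.mem_univ x)
  -- inner-sum computations
  have hIn1 : ∀ x h, ∑ i', q x h * w h i' * (1 + u x h i') = q x h := by
    intro x h
    have : ∑ i', q x h * w h i' * (1 + u x h i')
        = q x h * (∑ i', w h i') + q x h * ∑ i', w h i' * u x h i' := by
      rw [Finset.mul_sum, Finset.mul_sum, ← Finset.sum_add_distrib]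
      exact Finset.sum_congr rfl fun i _ => by ring
    rw [this, hw1, hu0]; ring
  have hIn2 : ∀ h i, ∑ x', q x' h * w h i * (1 + u x' h i) = w h i * (Q h + S h i) := by
    intro h i
    have : ∑ x', q x' h * w h i * (1 + u x' h i)
        = w h i * (∑ x', q x' h) + w h i * ∑ x', q x' h * u x' h i := by
      rw [Finset.mul_sum, Finset.mul_sum, ← Finset.sum_add_distrib]
      exact Finset.sum_congr rfl fun x _ => by ring
    rw [this]; ring
  have hIn3 : ∀ h, ∑ x', ∑ i', q x' h * w h i' * (1 + u x' h i') = Q h := by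
    intro h
    simp only [hQdef]
    exact Finset.sum_congr rfl fun x _ => hIn1 x h
  have hSlow : ∀ h i, -(Q h) / 4 ≤ S h i := by
    intro h i
    have : ∑ x', q x' h * (-(1/4) : ℝ) ≤ ∑ x', q x' h * u x' h i :=
      Finset.sum_le_sum fun x _ =>
        mul_le_mul_of_nonneg_left (abs_le.mp (hu x h i)).1 (hq0 x h)
    calc -(Q h) / 4 = ∑ x', q x' h * (-(1/4) : ℝ) := by
          rw [← Finset.sum_mul]; ring
      _ ≤ S h i := this
  -- sum of w * S over i vanishes
  have hwS : ∀ h, ∑ i, w h i * S h i = 0 := by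
    intro h
    have : ∑ i, w h i * S h i = ∑ x, q x h * ∑ i, w h i * u x h i := by
      simp only [hSdef, Finset.mul_sum]
      rw [Finset.sum_comm]
      exact Finset.sum_congr rfl fun x _ => Finset.sum_congr rfl fun i _ => by ring
    rw [this]
    simp [hu0]
  -- pointwise bound
  have key : ∀ x h i,
      (q x h * w h i * (1 + u x h i)) *
          Real.log ((q x h * w h i * (1 + u x h i)) *
              (∑ x', ∑ i', q x' h * w h i' * (1 + u x' h i')) /
            ((∑ i', q x h * w h i' * (1 + u x h i')) *
              (∑ x', q x' h * w h i * (1 + u x' h i))))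
        ≤ q x h * w h i * (u x h i + (u x h i) ^ 2)
          + q x h * w h i * (1 + u x h i) * (Real.log (Q h) - Real.log (Q h + S h i)) := by
    intro x h i
    rcases eq_or_lt_of_le (hq0 x h) with h1 | h1
    · simp [← h1]
    rcases eq_or_lt_of_le (hw0 h i) with h2 | h2
    · simp [← h2]
    have hu' := abs_le.mp (hu x h i)
    have h1u : (0:ℝ) < 1 + u x h i := by linarith [hu'.1]
    have hQpos : 0 < Q h := lt_of_lt_of_le h1 (hQq x h)
    have hQS : 0 < Q h + S h i := by
      have := hSlow h i; linarith
    rw [hIn1 x h, hIn2 h i, hIn3 h]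
    have harg : q x h * w h i * (1 + u x h i) * Q h / (q x h * (w h i * (Q h + S h i)))
        = (1 + u x h i) * (Q h / (Q h + S h i)) := by
      field_simp
    rw [harg, Real.log_mul h1u.ne' (by positivity),
      Real.log_div hQpos.ne' hQS.ne']
    have hb := aux1 (u x h i) (by linarith [hu'.1])
    have hqw : (0:ℝ) ≤ q x h * w h i := by positivity
    nlinarith [mul_le_mul_of_nonneg_left hb hqw]
  -- sum up the pointwise bound
  have step1 : (∑ x, ∑ h, ∑ i,
        (q x h * w h i * (1 + u x h i)) *
          Real.log ((q x h * w h i * (1 + u x h i)) *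
              (∑ x', ∑ i', q x' h * w h i' * (1 + u x' h i')) /
            ((∑ i', q x h * w h i' * (1 + u x h i')) *
              (∑ x', q x' h * w h i * (1 + u x' h i)))))
      ≤ ∑ x, ∑ h, ∑ i, (q x h * w h i * (u x h i + (u x h i) ^ 2)
          + q x h * w h i * (1 + u x h i) * (Real.log (Q h) - Real.log (Q h + S h i))) :=
    Finset.sum_le_sum fun x _ => Finset.sum_le_sum fun h _ => Finset.sum_le_sum fun i _ =>
      key x h i
  -- split the RHS sum
  have split : ∑ x, ∑ h, ∑ i, (q x h * w h i * (u x h i + (u x h i) ^ 2)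
          + q x h * w h i * (1 + u x h i) * (Real.log (Q h) - Real.log (Q h + S h i)))
      = (∑ x, ∑ h, q x h * ∑ i, w h i * (u x h i) ^ 2)
        + ∑ h, ∑ i, w h i * (Q h + S h i) * (Real.log (Q h) - Real.log (Q h + S h i)) := by
    have e1 : ∀ x h, ∑ i, q x h * w h i * (u x h i + (u x h i) ^ 2)
        = q x h * ∑ i, w h i * (u x h i) ^ 2 := by
      intro x h
      have : ∑ i, q x h * w h i * (u x h i + (u x h i) ^ 2)
          = q x h * (∑ i, w h i * u x h i) + q x h * ∑ i, w h i * (u x h i) ^ 2 := by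
        rw [Finset.mul_sum, Finset.mul_sum, ← Finset.sum_add_distrib]
        exact Finset.sum_congr rfl fun i _ => by ring
      rw [this, hu0]; ring
    have e2 : ∑ x, ∑ h, ∑ i,
          q x h * w h i * (1 + u x h i) * (Real.log (Q h) - Real.log (Q h + S h i))
        = ∑ h, ∑ i, w h i * (Q h + S h i) * (Real.log (Q h) - Real.log (Q h + S h i)) := by
      rw [Finset.sum_comm]
      refine Finset.sum_congr rfl fun h _ => ?_
      rw [Finset.sum_comm]
      refine Finset.sum_congr rfl fun i _ => ?_
      rw [← Finset.sum_mul, hIn2 h i]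
    calc ∑ x, ∑ h, ∑ i, (q x h * w h i * (u x h i + (u x h i) ^ 2)
          + q x h * w h i * (1 + u x h i) * (Real.log (Q h) - Real.log (Q h + S h i)))
        = (∑ x, ∑ h, ∑ i, q x h * w h i * (u x h i + (u x h i) ^ 2))
          + ∑ x, ∑ h, ∑ i,
            q x h * w h i * (1 + u x h i) * (Real.log (Q h) - Real.log (Q h + S h i)) := by
          rw [← Finset.sum_add_distrib]
          refine Finset.sum_congr rfl fun x _ => ?_
          rw [← Finset.sum_add_distrib]
          refine Finset.sum_congr rfl fun h _ => ?_
          rw [← Finset.sum_add_distrib]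
      _ = _ := by
          rw [e2]
          congr 1
          exact Finset.sum_congr rfl fun x _ => Finset.sum_congr rfl fun h _ => e1 x h
  -- the second piece is ≤ 0
  have B0 : ∑ h, ∑ i, w h i * (Q h + S h i) * (Real.log (Q h) - Real.log (Q h + S h i)) ≤ 0 := by
    have hpt : ∀ h i, w h i * (Q h + S h i) * (Real.log (Q h) - Real.log (Q h + S h i))
        ≤ -(w h i * S h i) := by
      intro h i
      rcases eq_or_lt_of_le (hw0 h i) with h2 | h2
      · simp [← h2]
      rcases eq_or_lt_of_le (hQ0 h) with h3 | h3
      · have hq' : ∀ x, q x h = 0 := by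
          intro x
          have := hQq x h
          have := hq0 x h
          linarith [h3]
        have hS0 : S h i = 0 := by
          simp only [hSdef]
          exact Finset.sum_eq_zero fun x _ => by rw [hq' x]; ring
        rw [hS0, ← h3]
        simp
      · have hQS : 0 < Q h + S h i := by have := hSlow h i; linarith
        have := aux2 (Q h) (Q h + S h i) h3 hQS
        nlinarith [mul_le_mul_of_nonneg_left this h2.le]
    calc ∑ h, ∑ i, w h i * (Q h + S h i) * (Real.log (Q h) - Real.log (Q h + S h i))
        ≤ ∑ h, ∑ i, -(w h i * S h i) :=
          Finset.sum_le_sum fun h _ => Finset.sum_le_sum fun i _ => hpt h i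
      _ = 0 := by
          refine Finset.sum_eq_zero fun h _ => ?_
          have : ∑ i, -(w h i * S h i) = -(∑ i, w h i * S h i) := by
            rw [← Finset.sum_neg_distrib]
          rw [this, hwS h, neg_zero]
  -- the first piece is nonneg, so ≤ 3 × itself
  have A0 : 0 ≤ ∑ x, ∑ h, q x h * ∑ i, w h i * (u x h i) ^ 2 :=
    Finset.sum_nonneg fun x _ => Finset.sum_nonneg fun h _ =>
      mul_nonneg (hq0 x h) (Finset.sum_nonneg fun i _ => mul_nonneg (hw0 h i) (sq_nonneg _))
  calc _ ≤ _ := step1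
    _ = _ := split
    _ ≤ ∑ x, ∑ h, q x h * ∑ i, w h i * (u x h i) ^ 2 := by linarith
    _ ≤ 3 * ∑ x, ∑ h, q x h * ∑ i, w h i * (u x h i) ^ 2 := by linarith
end

section
/- Let n ≥ 1, d = 2^n, and let α : 𝒫ₙ → {−1, +1} satisfy Σ_{P∈𝒫ₙ} α(P) = 0. Let 0 ≤ ε ≤ 1/4 and define p(P) = (1 + 4 α(P) ε)/d² for P ∈ 𝒫ₙ. Then for every density matrix ρ on ℂ^d and every unit vector φ ∈ ℂ^d, | d · Σ_{P∈𝒫ₙ} p(P) ⟨φ| P ρ P |φ⟩ − 1 | ≤ 4ε. -/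
open scoped Classical Matrix ComplexOrder

/-- The four single-qubit Pauli matrices `I, X, Y, Z`. -/
noncomputable def pauli1 : Fin 4 → Matrix (Fin 2) (Fin 2) ℂ
  | 0 => !![1, 0; 0, 1]
  | 1 => !![0, 1; 1, 0]
  | 2 => !![0, -Complex.I; Complex.I, 0]
  | 3 => !![1, 0; 0, -1]

/-- The `n`-qubit Pauli operator `P_{f 0} ⊗ ⋯ ⊗ P_{f (n-1)}`, as a matrix indexed by
`Fin n → Fin 2` (a type of cardinality `d = 2^n`). -/
noncomputable def PauliOp (n : ℕ) (f : Fin n → Fin 4) :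
    Matrix (Fin n → Fin 2) (Fin n → Fin 2) ℂ :=
  Matrix.of fun s t => ∏ i, pauli1 (f i) (s i) (t i)

/-!
The Pauli twirl `∑_P P ρ P = d (tr ρ) I` shows that the expectations `x_P = ⟨φ|PρP|φ⟩`, which are
nonnegative reals since `PρP` is positive semidefinite, sum to `d`. Hence the quantity in question
is `(4ε/d) ∑_P α(P) x_P`, and `|α(P)| = 1` bounds it by `4ε`.
-/

open Matrix Finset

lemma pauli1_isHermitian (a : Fin 4) : (pauli1 a).IsHermitian := by
  ext s t
  fin_cases a <;> fin_cases s <;> fin_cases t <;> simp [pauli1]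

lemma pauliOp_isHermitian (n : ℕ) (f : Fin n → Fin 4) : (PauliOp n f).IsHermitian := by
  ext s t
  simp only [PauliOp, conjTranspose_apply, of_apply, star_prod]
  exact prod_congr rfl fun i _ => (pauli1_isHermitian (f i)).apply (s i) (t i)

lemma sum_pauli1_mul_pauli1 (s t u v : Fin 2) :
    ∑ a : Fin 4, pauli1 a s u * pauli1 a v t
      = 2 * (1 : Matrix (Fin 2) (Fin 2) ℂ) s t * (1 : Matrix (Fin 2) (Fin 2) ℂ) u v := by
  fin_cases s <;> fin_cases t <;> fin_cases u <;> fin_cases v <;>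
    simp [pauli1, Fin.sum_univ_four, Complex.I_mul_I] <;> ring_nf

lemma prod_one_apply {ι κ R : Type*} [Fintype ι] [DecidableEq κ] [CommMonoidWithZero R]
    (s t : ι → κ) : ∏ i, (1 : Matrix κ κ R) (s i) (t i) = (1 : Matrix (ι → κ) (ι → κ) R) s t := by
  by_cases h : s = t
  · subst h; simp
  · obtain ⟨i, hi⟩ := Function.ne_iff.mp h
    rw [one_apply_ne h]
    exact prod_eq_zero (mem_univ i) (one_apply_ne hi)

lemma sum_pauliOp_mul_pauliOp (n : ℕ) (s t u v : Fin n → Fin 2) :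
    ∑ f : Fin n → Fin 4, PauliOp n f s u * PauliOp n f v t
      = 2 ^ n * (1 : Matrix (Fin n → Fin 2) (Fin n → Fin 2) ℂ) s t *
        (1 : Matrix (Fin n → Fin 2) (Fin n → Fin 2) ℂ) u v := by
  simp only [PauliOp, of_apply, ← prod_mul_distrib]
  rw [← Fintype.prod_sum fun i a => pauli1 a (s i) (u i) * pauli1 a (v i) (t i)]
  simp only [sum_pauli1_mul_pauli1, prod_mul_distrib, prod_const, card_univ, Fintype.card_fin,
    prod_one_apply]

lemma sum_pauliOp_mul_mul_pauliOp (n : ℕ) (ρ : Matrix (Fin n → Fin 2) (Fin n → Fin 2) ℂ) :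
    ∑ f : Fin n → Fin 4, PauliOp n f * ρ * PauliOp n f = (2 ^ n * ρ.trace) • 1 := by
  ext s t
  calc (∑ f : Fin n → Fin 4, PauliOp n f * ρ * PauliOp n f) s t
      = ∑ f : Fin n → Fin 4, ∑ u, ∑ v, ρ u v * (PauliOp n f s u * PauliOp n f v t) := by
        simp only [Matrix.sum_apply, mul_apply, sum_mul]
        refine sum_congr rfl fun f _ => ?_
        rw [sum_comm]
        exact sum_congr rfl fun u _ => sum_congr rfl fun v _ => by ring
    _ = ∑ u, ∑ v, ρ u v * ∑ f : Fin n → Fin 4, PauliOp n f s u * PauliOp n f v t := by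
        rw [sum_comm]
        refine sum_congr rfl fun u _ => ?_
        rw [sum_comm]
        simp only [mul_sum]
    _ = ((2 ^ n * ρ.trace) • 1 : Matrix _ _ ℂ) s t := by
        simp [sum_pauliOp_mul_pauliOp, one_apply, trace, mul_sum, mul_comm, mul_left_comm]

lemma Matrix.PosSemidef.exists_ofReal_eq_dotProduct_mulVec_conj {m : Type*} [Fintype m]
    {ρ B : Matrix m m ℂ} (hρ : ρ.PosSemidef) (hB : B.IsHermitian) (φ : m → ℂ) :
    ∃ x : ℝ, 0 ≤ x ∧ (x : ℂ) = star φ ⬝ᵥ (B * ρ * B) *ᵥ φ := by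
  have hconj := hρ.mul_mul_conjTranspose_same B
  rw [hB.eq] at hconj
  exact RCLike.nonneg_iff_exists_ofReal.mp (hconj.dotProduct_mulVec_nonneg φ)

lemma abs_mul_sum_div_sq_mul_sub_one_le {ι : Type*} [Fintype ι] {d δ : ℝ} (hd : 0 < d)
    (hδ : 0 ≤ δ) (α x : ι → ℝ) (hα : ∀ i, |α i| ≤ 1) (hx : ∀ i, 0 ≤ x i) (hxsum : ∑ i, x i = d) :
    |d * ∑ i, (1 + α i * δ) / d ^ 2 * x i - 1| ≤ δ := by
  have hsplit : d * ∑ i, (1 + α i * δ) / d ^ 2 * x i - 1 = δ / d * ∑ i, α i * x i := by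
    have hsum : ∑ i, (1 + α i * δ) / d ^ 2 * x i = (∑ i, x i + δ * ∑ i, α i * x i) / d ^ 2 := by
      rw [mul_sum, ← sum_add_distrib, sum_div]
      exact sum_congr rfl fun i _ => by ring
    rw [hsum, hxsum]
    field_simp
    ring
  have hbound : |∑ i, α i * x i| ≤ d := calc
    |∑ i, α i * x i| ≤ ∑ i, |α i * x i| := abs_sum_le_sum_abs _ _
    _ ≤ ∑ i, x i := sum_le_sum fun i _ => by
      rw [abs_mul, abs_of_nonneg (hx i)]
      exact mul_le_of_le_one_left (hx i) (hα i)
    _ = d := hxsum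
  calc |d * ∑ i, (1 + α i * δ) / d ^ 2 * x i - 1| = δ / d * |∑ i, α i * x i| := by
        rw [hsplit, abs_mul, abs_of_nonneg (by positivity)]
    _ ≤ δ / d * d := by gcongr
    _ = δ := div_mul_cancel₀ δ hd.ne'

theorem stmt_2_general (n : ℕ) (α : (Fin n → Fin 4) → ℝ)
    (hα : ∀ P, α P = 1 ∨ α P = -1)
    (ε : ℝ) (hε : 0 ≤ ε)
    (ρ : Matrix (Fin n → Fin 2) (Fin n → Fin 2) ℂ) (hρ : ρ.PosSemidef) (hρt : ρ.trace = 1)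
    (φ : (Fin n → Fin 2) → ℂ) (hφ : star φ ⬝ᵥ φ = 1) :
    ‖(2 ^ n : ℂ) *
        (∑ P : Fin n → Fin 4, (((1 + 4 * α P * ε) / (2 ^ n : ℝ) ^ 2 : ℝ) : ℂ) *
          (star φ ⬝ᵥ (PauliOp n P * ρ * PauliOp n P).mulVec φ)) - 1‖ ≤ 4 * ε := by
  choose x hx_nonneg hx using fun P =>
    hρ.exists_ofReal_eq_dotProduct_mulVec_conj (pauliOp_isHermitian n P) φ
  have hxsum : ∑ P, x P = (2 : ℝ) ^ n := by
    have hsum : ∑ P, (x P : ℂ) = 2 ^ n := by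
      simp only [hx, ← dotProduct_sum, ← sum_mulVec, sum_pauliOp_mul_mul_pauliOp, hρt,
        smul_mulVec, one_mulVec, dotProduct_smul, hφ, smul_eq_mul, mul_one]
    exact_mod_cast hsum
  have hα_abs : ∀ P, |α P| ≤ 1 := fun P => by rcases hα P with h | h <;> simp [h]
  have key := abs_mul_sum_div_sq_mul_sub_one_le (by positivity) (by positivity : 0 ≤ 4 * ε) α x
    hα_abs hx_nonneg hxsum
  have hreal : (2 ^ n : ℂ) * ∑ P, (((1 + 4 * α P * ε) / (2 ^ n : ℝ) ^ 2 : ℝ) : ℂ) * x P - 1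
      = ((2 ^ n * ∑ P, (1 + α P * (4 * ε)) / (2 ^ n) ^ 2 * x P - 1 : ℝ) : ℂ) := by
    push_cast
    congr 2
    exact sum_congr rfl fun P _ => by ring
  simp only [← hx]
  rw [hreal, Complex.norm_real, Real.norm_eq_abs]
  exact key

/-- for signs `α` summing to `0`, `0 ≤ ε ≤ 1/4`,
`p(P) = (1 + 4 α(P) ε)/d²`, a density matrix `ρ` and a unit vector `φ`,
`|d ∑_P p(P) ⟨φ|PρP|φ⟩ − 1| ≤ 4ε`. -/
theorem stmt_2 (n : ℕ) (hn : 1 ≤ n) (α : (Fin n → Fin 4) → ℝ)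
    (hα : ∀ P, α P = 1 ∨ α P = -1) (hαsum : ∑ P : Fin n → Fin 4, α P = 0)
    (ε : ℝ) (hε : 0 ≤ ε) (hε' : ε ≤ 1 / 4)
    (ρ : Matrix (Fin n → Fin 2) (Fin n → Fin 2) ℂ) (hρ : ρ.PosSemidef) (hρt : ρ.trace = 1)
    (φ : (Fin n → Fin 2) → ℂ) (hφ : star φ ⬝ᵥ φ = 1) :
    ‖(2 ^ n : ℂ) *
        (∑ P : Fin n → Fin 4, (((1 + 4 * α P * ε) / (2 ^ n : ℝ) ^ 2 : ℝ) : ℂ) *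
          (star φ ⬝ᵥ (PauliOp n P * ρ * PauliOp n P).mulVec φ)) - 1‖ ≤ 4 * ε :=
  stmt_2_general n α hα ε hε ρ hρ hρt φ hφ
end

section
/- Let n ≥ 1, d = 2^n. Let X be a Hermitian d×d complex matrix, let c : 𝒫ₙ → ℝ be coefficients with |c(P)| ≤ c₀ for all P ∈ 𝒫ₙ, and let φ ∈ ℂ^d be a unit vector. Then | ⟨φ| Σ_{P∈𝒫ₙ} c(P) · P X P |φ⟩ | ≤ c₀ · d · ‖X‖₁, where ‖X‖₁ = tr√(X†X) is the Schatten 1-norm (trace norm). -/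
open scoped Classical Matrix ComplexOrder

/-- The Schatten 1-norm (trace norm) `‖X‖₁ = tr √(XᴴX)`. -/
noncomputable def traceNorm {m : Type*} [Fintype m] [DecidableEq m] (X : Matrix m m ℂ) : ℝ :=
  (((Matrix.posSemidef_conjTranspose_mul_self X).1.eigenvectorUnitary : Matrix m m ℂ) *
      Matrix.diagonal (((↑) : ℝ → ℂ) ∘ Real.sqrt ∘ (Matrix.posSemidef_conjTranspose_mul_self X).1.eigenvalues) *
      star ((Matrix.posSemidef_conjTranspose_mul_self X).1.eigenvectorUnitary : Matrix m m ℂ)).trace.re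

/-!
Averaging over the Pauli group twirls any matrix into a multiple of the identity,
`∑_P P A P = 2ⁿ tr(A) · 1`. Since `-|X| ≤ X ≤ |X|` in the Loewner order, each term obeys
`|⟨Pφ|X|Pφ⟩| ≤ ⟨Pφ| |X| |Pφ⟩`, so the sum is at most `c₀ ⟨φ| ∑_P P |X| P |φ⟩ = c₀ 2ⁿ tr |X|`,
and `tr |X| = ‖X‖₁`.
-/

open Matrix

lemma conjTranspose_pauli1 (k : Fin 4) : (pauli1 k)ᴴ = pauli1 k := by
  ext a b
  fin_cases k <;> fin_cases a <;> fin_cases b <;> simp [pauli1]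

lemma sum_pauli1_apply_mul_apply (a b c d : Fin 2) :
    ∑ k : Fin 4, pauli1 k a b * pauli1 k c d = if a = d ∧ b = c then 2 else 0 := by
  fin_cases a <;> fin_cases b <;> fin_cases c <;> fin_cases d <;>
    simp [pauli1, Fin.sum_univ_four] <;> norm_num

lemma conjTranspose_PauliOp (n : ℕ) (f : Fin n → Fin 4) : (PauliOp n f)ᴴ = PauliOp n f := by
  ext s t
  simp only [PauliOp, conjTranspose_apply, of_apply, star_prod]
  exact Finset.prod_congr rfl fun i _ => by rw [← conjTranspose_apply, conjTranspose_pauli1]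

lemma sum_PauliOp_apply_mul_apply (n : ℕ) (s u v t : Fin n → Fin 2) :
    ∑ f : Fin n → Fin 4, PauliOp n f s u * PauliOp n f v t
      = if s = t ∧ u = v then (2 : ℂ) ^ n else 0 := by
  simp only [PauliOp, of_apply, ← Finset.prod_mul_distrib]
  rw [← Fintype.prod_sum fun i (k : Fin 4) => pauli1 k (s i) (u i) * pauli1 k (v i) (t i)]
  simp only [sum_pauli1_apply_mul_apply, Finset.prod_ite_zero, Finset.prod_const,
    Finset.card_univ, Fintype.card_fin, Finset.mem_univ, true_imp_iff, funext_iff, forall_and]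

lemma sum_PauliOp_mul_mul_PauliOp (n : ℕ) (A : Matrix (Fin n → Fin 2) (Fin n → Fin 2) ℂ) :
    ∑ f : Fin n → Fin 4, PauliOp n f * A * PauliOp n f = ((2 : ℂ) ^ n * A.trace) • 1 := by
  ext s t
  have hsum : (∑ f : Fin n → Fin 4, PauliOp n f * A * PauliOp n f) s t
      = ∑ v, ∑ u, A u v * ∑ f : Fin n → Fin 4, PauliOp n f s u * PauliOp n f v t := by
    simp only [Matrix.sum_apply, mul_apply, Finset.sum_mul, Finset.mul_sum]
    rw [Finset.sum_comm]
    refine Finset.sum_congr rfl fun u _ => ?_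
    rw [Finset.sum_comm]
    exact Finset.sum_congr rfl fun v _ => Finset.sum_congr rfl fun f _ => by ring
  rw [hsum]
  simp only [sum_PauliOp_apply_mul_apply, mul_ite, mul_zero]
  by_cases hst : s = t
  · simp [hst, trace, Finset.mul_sum, mul_comm]
  · simp [hst]

section QuadraticForm

variable {m : Type*} [Fintype m]

lemma dotProduct_conjTranspose_mul_mul_mulVec {R : Type*} [CommSemiring R] [StarRing R]
    (M A : Matrix m m R) (φ : m → R) :
    star φ ⬝ᵥ (Mᴴ * A * M) *ᵥ φ = star (M *ᵥ φ) ⬝ᵥ A *ᵥ (M *ᵥ φ) := by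
  rw [← mulVec_mulVec, ← mulVec_mulVec, dotProduct_mulVec, star_mulVec]

open scoped MatrixOrder

variable [DecidableEq m]

lemma traceNorm_eq_re_trace_abs (X : Matrix m m ℂ) : traceNorm X = (CFC.abs X).trace.re := by
  rw [CFC.abs, star_eq_conjTranspose,
    CFC.sqrt_eq_real_sqrt _ (posSemidef_conjTranspose_mul_self X).nonneg, cfcₙ_eq_cfc,
    IsHermitian.cfc_eq]
  rfl

lemma norm_dotProduct_mulVec_le_re_abs {X : Matrix m m ℂ} (hX : X.IsHermitian) (ψ : m → ℂ) :
    ‖star ψ ⬝ᵥ X *ᵥ ψ‖ ≤ (star ψ ⬝ᵥ CFC.abs X *ᵥ ψ).re := by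
  have hle : X ≤ CFC.abs X := sub_nonneg.mp <| by
    rw [CFC.abs_sub_self X hX.isSelfAdjoint]
    exact smul_nonneg zero_le_two (CFC.negPart_nonneg X)
  have hge : -CFC.abs X ≤ X := neg_le_iff_add_nonneg.mpr <| by
    rw [add_comm, CFC.abs_add_self X hX.isSelfAdjoint]
    exact smul_nonneg zero_le_two (CFC.posPart_nonneg X)
  have h₁ := (le_iff.mp hle).dotProduct_mulVec_nonneg ψ
  have h₂ := (le_iff.mp hge).dotProduct_mulVec_nonneg ψ
  simp only [sub_mulVec, dotProduct_sub, sub_neg_eq_add, add_mulVec, dotProduct_add,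
    Complex.nonneg_iff, Complex.add_re, Complex.sub_re, Complex.add_im, Complex.sub_im] at h₁ h₂
  rw [← Complex.abs_re_eq_norm.mpr (by linarith)]
  exact abs_le.mpr ⟨by linarith, by linarith⟩

lemma norm_dotProduct_sum_smul_mulVec_le {ι : Type*} [Fintype ι] {X : Matrix m m ℂ}
    (hX : X.IsHermitian) (M : ι → Matrix m m ℂ) {c : ι → ℝ} {c₀ : ℝ} (hc : ∀ i, |c i| ≤ c₀)
    (φ : m → ℂ) :
    ‖star φ ⬝ᵥ (∑ i, (c i : ℂ) • ((M i)ᴴ * X * M i)) *ᵥ φ‖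
      ≤ c₀ * (star φ ⬝ᵥ (∑ i, (M i)ᴴ * CFC.abs X * M i) *ᵥ φ).re := by
  simp only [sum_mulVec, dotProduct_sum, smul_mulVec, dotProduct_smul,
    dotProduct_conjTranspose_mul_mul_mulVec, Complex.re_sum, Finset.mul_sum]
  refine (norm_sum_le _ _).trans (Finset.sum_le_sum fun i _ => ?_)
  rw [smul_eq_mul, norm_mul, Complex.norm_real, Real.norm_eq_abs]
  exact mul_le_mul (hc i) (norm_dotProduct_mulVec_le_re_abs hX _) (norm_nonneg _)
    ((abs_nonneg _).trans (hc i))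

end QuadraticForm

theorem stmt_3_general (n : ℕ)
    (X : Matrix (Fin n → Fin 2) (Fin n → Fin 2) ℂ) (hX : X.IsHermitian)
    (c : (Fin n → Fin 4) → ℝ) (c₀ : ℝ) (hc : ∀ P, |c P| ≤ c₀)
    (φ : (Fin n → Fin 2) → ℂ) (hφ : star φ ⬝ᵥ φ = 1) :
    ‖star φ ⬝ᵥ
        (∑ P : Fin n → Fin 4, (c P : ℂ) • (PauliOp n P * X * PauliOp n P)).mulVec φ‖
      ≤ c₀ * 2 ^ n * traceNorm X := by
  have h := norm_dotProduct_sum_smul_mulVec_le hX (PauliOp n) hc φ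
  simp only [conjTranspose_PauliOp, sum_PauliOp_mul_mul_PauliOp, smul_mulVec, one_mulVec,
    dotProduct_smul, hφ, smul_eq_mul, mul_one] at h
  rwa [← Complex.ofReal_ofNat, ← Complex.ofReal_pow, Complex.re_ofReal_mul, ← mul_assoc,
    ← traceNorm_eq_re_trace_abs] at h

/-- for Hermitian `X`, coefficients `|c(P)| ≤ c₀` and a unit vector `φ`,
`|⟨φ| ∑_P c(P) P X P |φ⟩| ≤ c₀ · d · ‖X‖₁`. -/
theorem stmt_3 (n : ℕ) (hn : 1 ≤ n)
    (X : Matrix (Fin n → Fin 2) (Fin n → Fin 2) ℂ) (hX : X.IsHermitian)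
    (c : (Fin n → Fin 4) → ℝ) (c₀ : ℝ) (hc : ∀ P, |c P| ≤ c₀)
    (φ : (Fin n → Fin 2) → ℂ) (hφ : star φ ⬝ᵥ φ = 1) :
    ‖star φ ⬝ᵥ
        (∑ P : Fin n → Fin 4, (c P : ℂ) • (PauliOp n P * X * PauliOp n P)).mulVec φ‖
      ≤ c₀ * 2 ^ n * traceNorm X :=
  stmt_3_general n X hX c c₀ hc φ hφ
end

section
/- Let n ≥ 1, d = 2^n, ε ≥ 0. Let {λ_i}_{i∈ℐ} be nonnegative reals and {φ_i}_{i∈ℐ} unit vectors in ℂ^d (ℐ finite) with Σ_{i∈ℐ} λ_i |φ_i⟩⟨φ_i| = I_d. Let ρ be a density matrix on ℂ^d and set ρ̃ = ρ − I_d/d. Let α ∈ ℝ^{d²}, α ≠ 0, with coordinates indexed by 𝒫ₙ, and define u_i = (2ε/‖α‖₂) · Σ_{P∈𝒫ₙ} α(P) ⟨φ_i| P ρ̃ P |φ_i⟩. Then Σ_{i∈ℐ} λ_i u_i² ≤ 16 d ε². -/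
open scoped Classical Matrix ComplexOrder

section helpers

variable {n : ℕ}

/-- sum over functions of a product = product of sums -/
lemma pi_sum_prod {R : Type*} [CommSemiring R] {k : ℕ} {κ : Type*} [Fintype κ]
    (F : Fin k → κ → R) :
    ∑ t : Fin k → κ, ∏ i, F i (t i) = ∏ i, ∑ b, F i b :=
  (Fintype.prod_sum F).symm

noncomputable def tp (M : Fin n → Matrix (Fin 2) (Fin 2) ℂ) :
    Matrix (Fin n → Fin 2) (Fin n → Fin 2) ℂ :=
  Matrix.of fun s t => ∏ i, M i (s i) (t i)

lemma PauliOp_eq_tp (f : Fin n → Fin 4) : PauliOp n f = tp (fun i => pauli1 (f i)) := rfl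

lemma tp_mul (M N : Fin n → Matrix (Fin 2) (Fin 2) ℂ) :
    tp M * tp N = tp (fun i => M i * N i) := by
  ext s u
  simp only [tp, Matrix.mul_apply, Matrix.of_apply]
  rw [← pi_sum_prod (fun i b => M i (s i) b * N i b (u i))]
  exact Finset.sum_congr rfl fun t _ => Finset.prod_mul_distrib.symm

lemma tp_trace (M : Fin n → Matrix (Fin 2) (Fin 2) ℂ) :
    (tp M).trace = ∏ i, (M i).trace := by
  simp only [Matrix.trace, Matrix.diag, tp, Matrix.of_apply]
  exact pi_sum_prod (fun i b => M i b b)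

lemma tp_conjT (M : Fin n → Matrix (Fin 2) (Fin 2) ℂ) :
    (tp M)ᴴ = tp (fun i => (M i)ᴴ) := by
  ext s t
  simp only [tp, Matrix.conjTranspose_apply, Matrix.of_apply, star_prod]

lemma tp_one : tp (fun _ : Fin n => (1 : Matrix (Fin 2) (Fin 2) ℂ)) = 1 := by
  ext s t
  simp only [tp, Matrix.of_apply, Matrix.one_apply]
  by_cases h : s = t
  · subst h; simp
  · rw [if_neg h]
    obtain ⟨i, hi⟩ := Function.ne_iff.mp h
    exact Finset.prod_eq_zero (Finset.mem_univ i) (by simp [Matrix.one_apply, hi])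

lemma tp_smul (c : Fin n → ℂ) (M : Fin n → Matrix (Fin 2) (Fin 2) ℂ) :
    tp (fun i => c i • M i) = (∏ i, c i) • tp M := by
  ext s t
  simp only [tp, Matrix.of_apply, Matrix.smul_apply, smul_eq_mul, Pi.smul_apply]
  rw [Finset.prod_mul_distrib]

end helpers

section qubit

def sgn1 : Fin 4 → Fin 4 → ℤ :=
  fun a b => if a = 0 ∨ b = 0 ∨ a = b then 1 else -1

lemma pauli1_conjT (a : Fin 4) : (pauli1 a)ᴴ = pauli1 a := by
  fin_cases a <;>
    · ext i j
      fin_cases i <;> fin_cases j <;>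
        simp [pauli1, Matrix.conjTranspose_apply]

lemma pauli1_mul_self (a : Fin 4) : pauli1 a * pauli1 a = 1 := by
  fin_cases a <;>
    · ext i j
      fin_cases i <;> fin_cases j <;>
        simp [pauli1, Matrix.mul_apply, Fin.sum_univ_two, Matrix.one_apply, Complex.I_mul_I] <;>
        ring_nf <;> simp [Complex.I_sq]

lemma pauli1_conj (a b : Fin 4) :
    pauli1 a * pauli1 b * pauli1 a = (sgn1 a b : ℂ) • pauli1 b := by
  fin_cases a <;> fin_cases b <;>
    · ext i j
      fin_cases i <;> fin_cases j <;>
        simp [pauli1, sgn1, Matrix.mul_apply, Fin.sum_univ_two, Complex.I_mul_I] <;>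
        ring_nf <;> simp [Complex.I_sq] <;> ring

lemma pauli1_trace_mul (a b : Fin 4) :
    (pauli1 a * pauli1 b).trace = if a = b then 2 else 0 := by
  fin_cases a <;> fin_cases b <;>
    simp [pauli1, Matrix.trace, Matrix.mul_apply, Fin.sum_univ_two, Complex.I_mul_I,
      Matrix.diag] <;> ring_nf <;> simp [Complex.I_sq] <;> ring

lemma sgn1_ortho : ∀ b c : Fin 4,
    ∑ a, sgn1 b a * sgn1 c a = if b = c then 4 else 0 := by decide

lemma pauli1_complete (s t u v : Fin 2) :
    ∑ a : Fin 4, pauli1 a s t * pauli1 a u v =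
      if s = v ∧ t = u then 2 else 0 := by
  fin_cases s <;> fin_cases t <;> fin_cases u <;> fin_cases v <;>
    norm_num [pauli1, Fin.sum_univ_four] <;> ring_nf <;> simp [Complex.I_sq] <;> ring

end qubit

section nqubit

variable {n : ℕ}

lemma pauli1_zero : pauli1 0 = 1 := by
  ext i j; fin_cases i <;> fin_cases j <;> simp [pauli1, Matrix.one_apply]

lemma PauliOp_conjT (f : Fin n → Fin 4) : (PauliOp n f)ᴴ = PauliOp n f := by
  rw [PauliOp_eq_tp, tp_conjT]
  exact congrArg tp (funext fun i => pauli1_conjT (f i))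

lemma PauliOp_mul_self (f : Fin n → Fin 4) : PauliOp n f * PauliOp n f = 1 := by
  rw [PauliOp_eq_tp, tp_mul,
    show (fun i => pauli1 (f i) * pauli1 (f i)) = fun _ : Fin n => (1 : Matrix (Fin 2) (Fin 2) ℂ)
      from funext fun i => pauli1_mul_self (f i)]
  exact tp_one

lemma PauliOp_zero : PauliOp n (fun _ => 0) = 1 := by
  rw [PauliOp_eq_tp,
    show (fun i : Fin n => pauli1 0) = fun _ : Fin n => (1 : Matrix (Fin 2) (Fin 2) ℂ)
      from funext fun _ => pauli1_zero]
  exact tp_one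

noncomputable def Sgn (f g : Fin n → Fin 4) : ℝ := ∏ i, (sgn1 (f i) (g i) : ℝ)

lemma PauliOp_conj (f g : Fin n → Fin 4) :
    PauliOp n f * PauliOp n g * PauliOp n f = ((Sgn f g : ℝ) : ℂ) • PauliOp n g := by
  rw [PauliOp_eq_tp f, PauliOp_eq_tp g, tp_mul, tp_mul,
    show (fun i => pauli1 (f i) * pauli1 (g i) * pauli1 (f i))
        = fun i => ((sgn1 (f i) (g i) : ℂ)) • pauli1 (g i)
      from funext fun i => pauli1_conj (f i) (g i), tp_smul]
  congr 1
  rw [Sgn]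
  push_cast
  rfl

lemma PauliOp_trace_mul (f g : Fin n → Fin 4) :
    (PauliOp n f * PauliOp n g).trace = if f = g then ((2 : ℂ)^n) else 0 := by
  rw [PauliOp_eq_tp, PauliOp_eq_tp, tp_mul, tp_trace]
  simp only [pauli1_trace_mul]
  by_cases h : f = g
  · subst h; simp
  · rw [if_neg h]
    obtain ⟨i, hi⟩ := Function.ne_iff.mp h
    exact Finset.prod_eq_zero (Finset.mem_univ i) (by simp [hi])

lemma PauliOp_trace (f : Fin n → Fin 4) :
    (PauliOp n f).trace = if f = (fun _ => 0) then ((2 : ℂ)^n) else 0 := by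
  have := PauliOp_trace_mul f (fun _ => 0)
  rwa [PauliOp_zero, mul_one] at this

lemma sgn1_ortho_real (b c : Fin 4) :
    ∑ a, (sgn1 b a : ℝ) * (sgn1 c a : ℝ) = if b = c then 4 else 0 := by
  have := sgn1_ortho b c
  have h2 : ((∑ a, sgn1 b a * sgn1 c a : ℤ) : ℝ) = ((if b = c then 4 else 0 : ℤ) : ℝ) :=
    congrArg _ this
  push_cast at h2
  convert h2 using 2 <;> simp

lemma Sgn_ortho (f g : Fin n → Fin 4) :
    ∑ h : Fin n → Fin 4, Sgn f h * Sgn g h = if f = g then (4 : ℝ)^n else 0 := by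
  have key : ∑ h : Fin n → Fin 4, Sgn f h * Sgn g h
      = ∏ i, ∑ a, (sgn1 (f i) a : ℝ) * (sgn1 (g i) a : ℝ) := by
    rw [← pi_sum_prod (fun i a => (sgn1 (f i) a : ℝ) * (sgn1 (g i) a : ℝ))]
    exact Finset.sum_congr rfl fun h _ => by
      rw [Sgn, Sgn, ← Finset.prod_mul_distrib]
  rw [key]
  simp only [sgn1_ortho_real]
  by_cases h : f = g
  · subst h; simp
  · rw [if_neg h]
    obtain ⟨i, hi⟩ := Function.ne_iff.mp h
    exact Finset.prod_eq_zero (Finset.mem_univ i) (by simp [hi])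

lemma PauliOp_complete (s t u v : Fin n → Fin 2) :
    ∑ f : Fin n → Fin 4, PauliOp n f s t * PauliOp n f u v =
      if s = v ∧ t = u then ((2 : ℂ)^n) else 0 := by
  have key : ∑ f : Fin n → Fin 4, PauliOp n f s t * PauliOp n f u v
      = ∏ i, ∑ a, pauli1 a (s i) (t i) * pauli1 a (u i) (v i) := by
    rw [← pi_sum_prod (fun i a => pauli1 a (s i) (t i) * pauli1 a (u i) (v i))]
    exact Finset.sum_congr rfl fun f _ => by
      simp only [PauliOp, Matrix.of_apply, ← Finset.prod_mul_distrib]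
  rw [key]
  simp only [pauli1_complete]
  by_cases h : s = v ∧ t = u
  · obtain ⟨h1, h2⟩ := h; subst h1; subst h2; simp
  · rw [if_neg h]
    rw [not_and_or] at h
    rcases h with h | h
    · obtain ⟨i, hi⟩ := Function.ne_iff.mp h
      exact Finset.prod_eq_zero (Finset.mem_univ i) (by simp [hi])
    · obtain ⟨i, hi⟩ := Function.ne_iff.mp h
      exact Finset.prod_eq_zero (Finset.mem_univ i) (by simp [hi])

lemma pauli_expand (T : Matrix (Fin n → Fin 2) (Fin n → Fin 2) ℂ) :
    T = ∑ g, (((2:ℂ)^n)⁻¹ * (T * PauliOp n g).trace) • PauliOp n g := by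
  have h2 : ((2:ℂ)^n) ≠ 0 := by positivity
  ext s t
  simp only [Matrix.sum_apply, Matrix.smul_apply, smul_eq_mul, Matrix.trace, Matrix.diag,
    Matrix.mul_apply]
  have step : ∀ g, ((2:ℂ)^n)⁻¹ * (∑ u, ∑ v, T u v * PauliOp n g v u) * PauliOp n g s t
      = ((2:ℂ)^n)⁻¹ * (∑ u, ∑ v, T u v * (PauliOp n g v u * PauliOp n g s t)) := by
    intro g; rw [mul_assoc, Finset.sum_mul]
    congr 1; refine Finset.sum_congr rfl fun u _ => ?_
    rw [Finset.sum_mul]; exact Finset.sum_congr rfl fun v _ => by ring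
  rw [Finset.sum_congr rfl fun g _ => step g, ← Finset.mul_sum]
  rw [Finset.sum_comm]
  have swap2 : ∑ u, ∑ g : Fin n → Fin 4, ∑ v, T u v * (PauliOp n g v u * PauliOp n g s t)
      = ∑ u, ∑ v, T u v * (∑ g : Fin n → Fin 4, PauliOp n g v u * PauliOp n g s t) := by
    refine Finset.sum_congr rfl fun u _ => ?_
    rw [Finset.sum_comm]
    exact Finset.sum_congr rfl fun v _ => by rw [Finset.mul_sum]
  rw [swap2]
  simp only [PauliOp_complete]
  have : ∀ u, ∑ v, T u v * (if v = t ∧ u = s then ((2:ℂ)^n) else 0)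
      = if u = s then T u t * (2:ℂ)^n else 0 := by
    intro u
    by_cases hu : u = s
    · subst hu
      simp [Finset.sum_ite_eq', mul_comm]
    · simp [hu]
  rw [Finset.sum_congr rfl fun u _ => this u]
  simp [Finset.sum_ite_eq']
  field_simp

end nqubit

section psd

variable {m : Type*} [Fintype m] [DecidableEq m]

lemma trace_re_nonneg {M : Matrix m m ℂ} (hM : M.PosSemidef) : 0 ≤ M.trace.re := by
  have h : ∀ i, 0 ≤ (M i i).re := by
    intro i
    have h1 := hM.re_dotProduct_nonneg (Pi.single i 1)
    have hstar : star (Pi.single i (1:ℂ) : m → ℂ) = (Pi.single i (1:ℂ) : m → ℂ) := by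
      ext j; by_cases h : j = i <;> simp [Pi.single_apply, h]
    have h2 : dotProduct (star (Pi.single i 1)) (M *ᵥ Pi.single i 1) = M i i := by
      rw [hstar]
      simp [dotProduct, Matrix.mulVec, Pi.single_apply, mul_comm,
        Finset.sum_ite_eq, Finset.sum_ite_eq']
    rw [h2] at h1
    exact h1
  have : M.trace.re = ∑ i, (M i i).re := by
    simp [Matrix.trace, Matrix.diag, Complex.re_sum]
  rw [this]
  exact Finset.sum_nonneg fun i _ => h i

open scoped MatrixOrder in
lemma trace_mul_re_nonneg {M N : Matrix m m ℂ} (hM : M.PosSemidef) (hN : N.PosSemidef) :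
    0 ≤ ((M * N).trace).re := by
  set S := CFC.sqrt M with hS
  have hSS : S * S = M := CFC.sqrt_mul_sqrt_self M hM.nonneg
  have hSh : Sᴴ = S := (CFC.sqrt_nonneg M).isSelfAdjoint
  have key : (M * N).trace = (S * N * Sᴴ).trace := by
    rw [hSh, ← hSS, mul_assoc, Matrix.trace_mul_comm]
  rw [key]
  exact trace_re_nonneg (hN.mul_mul_conjTranspose_same S)

lemma psd_of_sq_eq_two_smul (B : Matrix m m ℂ) (hB : Bᴴ = B) (h2 : B * B = (2:ℂ) • B) :
    B.PosSemidef := by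
  set c : ℂ := (((Real.sqrt 2)⁻¹ : ℝ) : ℂ) with hc
  have h12 : ((Real.sqrt 2)⁻¹ * (Real.sqrt 2)⁻¹ : ℝ) = 1/2 := by
    rw [← mul_inv, Real.mul_self_sqrt] <;> norm_num
  have hcc : c * c * 2 = 1 := by
    rw [hc, ← Complex.ofReal_mul, h12]
    norm_num
  have key : B = (c • B)ᴴ * (c • B) := by
    rw [Matrix.conjTranspose_smul, hB]
    have : star c = c := by rw [hc]; exact Complex.conj_ofReal _
    rw [this, Matrix.smul_mul, Matrix.mul_smul, h2, smul_smul, smul_smul,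
      show c * c * (2:ℂ) = 1 from hcc, one_smul]
  rw [key]
  exact Matrix.posSemidef_conjTranspose_mul_self _

lemma trace_mul_star_eq {M N : Matrix m m ℂ} (hM : Mᴴ = M) (hN : Nᴴ = N) :
    (starRingEnd ℂ) ((M * N).trace) = (M * N).trace := by
  have : star ((M * N).trace) = ((M * N)ᴴ).trace := (Matrix.trace_conjTranspose _).symm
  rw [show (starRingEnd ℂ) ((M * N).trace) = star ((M * N).trace) from rfl, this,
    Matrix.conjTranspose_mul, hM, hN, Matrix.trace_mul_comm]

lemma trace_rho_P_bound {M P : Matrix m m ℂ} (hM : M.PosSemidef) (hMt : M.trace = 1)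
    (hP : Pᴴ = P) (hPP : P * P = 1) : |((M * P).trace).re| ≤ 1 := by
  have psd1 : ((1 : Matrix m m ℂ) - P).PosSemidef := by
    apply psd_of_sq_eq_two_smul
    · rw [Matrix.conjTranspose_sub, Matrix.conjTranspose_one, hP]
    · rw [sub_mul, mul_sub, mul_sub, hPP, one_mul, mul_one, one_mul]
      rw [smul_sub]
      ring_nf
      rw [two_smul, two_smul]
      abel
  have psd2 : ((1 : Matrix m m ℂ) + P).PosSemidef := by
    apply psd_of_sq_eq_two_smul
    · rw [Matrix.conjTranspose_add, Matrix.conjTranspose_one, hP]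
    · rw [add_mul, mul_add, mul_add, hPP, one_mul, mul_one, one_mul]
      rw [smul_add]
      ring_nf
      rw [two_smul, two_smul]
      abel
  have h1 := trace_mul_re_nonneg hM psd1
  have h2 := trace_mul_re_nonneg hM psd2
  rw [Matrix.mul_sub, mul_one, Matrix.trace_sub, hMt] at h1
  rw [Matrix.mul_add, mul_one, Matrix.trace_add, hMt] at h2
  rw [abs_le]
  constructor
  · have : (1 + (M * P).trace).re = 1 + ((M * P).trace).re := by simp
    rw [this] at h2; linarith
  · have : ((1 : ℂ) - (M * P).trace).re = 1 - ((M * P).trace).re := by simp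
    rw [this] at h1; linarith

end psd

section cs

variable {m : Type*} [Fintype m]

lemma cs_dot (x y : m → ℂ) :
    ‖dotProduct (star x) y‖ ^ 2
      ≤ (dotProduct (star x) x).re * (dotProduct (star y) y).re := by
  let x' : EuclideanSpace ℂ m := (WithLp.equiv 2 (m → ℂ)).symm x
  let y' : EuclideanSpace ℂ m := (WithLp.equiv 2 (m → ℂ)).symm y
  have hinner : ∀ a b : m → ℂ,
      (inner ℂ ((WithLp.equiv 2 (m → ℂ)).symm a) ((WithLp.equiv 2 (m → ℂ)).symm b) : ℂ)
        = dotProduct (star a) b := by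
    intro a b
    rw [PiLp.inner_apply]
    simp [RCLike.inner_apply, dotProduct, mul_comm]
  have h := norm_inner_le_norm (𝕜 := ℂ) x' y'
  have h2 : ‖(inner ℂ x' y' : ℂ)‖ ^ 2 ≤ (‖x'‖ * ‖y'‖) ^ 2 := by
    apply pow_le_pow_left₀ (norm_nonneg _) h
  rw [mul_pow] at h2
  rw [← inner_self_eq_norm_sq (𝕜 := ℂ) x', ← inner_self_eq_norm_sq (𝕜 := ℂ) y'] at h2
  have e1 : (inner ℂ x' y' : ℂ) = dotProduct (star x) y := hinner x y
  have e2 : RCLike.re (inner ℂ x' x' : ℂ) = (dotProduct (star x) x).re := by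
    rw [hinner x x]; rfl
  have e3 : RCLike.re (inner ℂ y' y' : ℂ) = (dotProduct (star y) y).re := by
    rw [hinner y y]; rfl
  rw [e1, e2, e3] at h2
  exact h2

lemma cs_step (B : Matrix m m ℂ) (hB : Bᴴ = B) (φ : m → ℂ)
    (hφ : dotProduct (star φ) φ = 1) :
    ((dotProduct (star φ) (B *ᵥ φ)).re) ^ 2
      ≤ (dotProduct (star φ) ((B * B) *ᵥ φ)).re := by
  set ψ := B *ᵥ φ with hψ
  have h1 : (dotProduct (star φ) ψ).re ^ 2 ≤ ‖dotProduct (star φ) ψ‖ ^ 2 := by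
    rw [Complex.sq_norm, Complex.normSq_apply]
    nlinarith [sq_nonneg (dotProduct (star φ) ψ).im]
  have h2 := cs_dot φ ψ
  have h3 : dotProduct (star ψ) ψ = dotProduct (star φ) ((B * B) *ᵥ φ) := by
    rw [hψ, Matrix.star_mulVec, hB, Matrix.dotProduct_mulVec (star φ ᵥ* B) B φ,
      Matrix.vecMul_vecMul, ← Matrix.dotProduct_mulVec]
  rw [hφ, h3, Complex.one_re, one_mul] at h2
  exact le_trans h1 h2

lemma sum_mulVec' {κ : Type*} [Fintype κ] (f : κ → Matrix m m ℂ) (v : m → ℂ) :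
    (∑ k, f k) *ᵥ v = ∑ k, f k *ᵥ v := by
  ext j
  simp only [Matrix.mulVec, dotProduct, Finset.sum_apply, Matrix.sum_apply,
    Finset.sum_mul]
  exact Finset.sum_comm

lemma dotProduct_sum' {κ : Type*} [Fintype κ] (v : m → ℂ) (f : κ → m → ℂ) :
    dotProduct v (∑ k, f k) = ∑ k, dotProduct v (f k) := by
  simp only [dotProduct, Finset.sum_apply, Finset.mul_sum]
  exact Finset.sum_comm

lemma dot_eq_trace (M : Matrix m m ℂ) (φ : m → ℂ) :
    dotProduct (star φ) (M *ᵥ φ) = (M * Matrix.vecMulVec φ (star φ)).trace := by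
  simp only [Matrix.trace, Matrix.diag, Matrix.mul_apply, Matrix.vecMulVec_apply,
    dotProduct, Matrix.mulVec, Pi.star_apply]
  rw [Finset.sum_congr rfl (fun s _ => Finset.mul_sum _ _ _)]
  refine Finset.sum_congr rfl fun s _ => Finset.sum_congr rfl fun t _ => by ring

end cs


/-- for a rank-one POVM `{λ_i |φ_i⟩⟨φ_i|}` summing to the identity, a density
matrix `ρ` with `ρ̃ = ρ − I/d`, and `α ∈ ℝ^{d²} \ {0}`, the deviations
`u_i = (2ε/‖α‖₂) ∑_P α(P) ⟨φ_i| P ρ̃ P |φ_i⟩` satisfy `∑_i λ_i u_i² ≤ 16 d ε²`. -/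
theorem stmt_11 (n : ℕ) (hn : 1 ≤ n) (ε : ℝ) (hε : 0 ≤ ε)
    {ι : Type*} [Fintype ι] (lam : ι → ℝ) (hlam : ∀ i, 0 ≤ lam i)
    (φ : ι → (Fin n → Fin 2) → ℂ) (hφ : ∀ i, star (φ i) ⬝ᵥ φ i = 1)
    (hPOVM : ∑ i, (lam i : ℂ) • Matrix.vecMulVec (φ i) (star (φ i)) =
      (1 : Matrix (Fin n → Fin 2) (Fin n → Fin 2) ℂ))
    (ρ : Matrix (Fin n → Fin 2) (Fin n → Fin 2) ℂ) (hρ : ρ.PosSemidef) (hρt : ρ.trace = 1)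
    (α : (Fin n → Fin 4) → ℝ) (hα : α ≠ 0) :
    ∑ i, lam i *
        (2 * ε / Real.sqrt (∑ P : Fin n → Fin 4, (α P) ^ 2) *
          ∑ P : Fin n → Fin 4, α P *
            (star (φ i) ⬝ᵥ
              (PauliOp n P * (ρ - ((2 ^ n : ℂ))⁻¹ • 1) * PauliOp n P).mulVec (φ i)).re) ^ 2
      ≤ 16 * 2 ^ n * ε ^ 2 := by
  classical
  set T : Matrix (Fin n → Fin 2) (Fin n → Fin 2) ℂ := ρ - ((2 ^ n : ℂ))⁻¹ • 1 with hTdef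
  have h2n : ((2:ℂ)^n) ≠ 0 := by positivity
  have h2nR : (0:ℝ) < (2:ℝ)^n := by positivity
  have hThm : Tᴴ = T := by
    rw [hTdef, Matrix.conjTranspose_sub, hρ.1, Matrix.conjTranspose_smul,
      Matrix.conjTranspose_one]
    congr 1
    simp
  have hPh : ∀ f, (PauliOp n f)ᴴ = PauliOp n f := PauliOp_conjT
  have hPu : ∀ f, PauliOp n f * PauliOp n f = 1 := PauliOp_mul_self
  -- the coefficients of T in the Pauli basis are real
  have hreal : ∀ g, ((T * PauliOp n g).trace).im = 0 := fun g =>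
    Complex.conj_eq_iff_im.mp (trace_mul_star_eq hThm (hPh g))
  set c : (Fin n → Fin 4) → ℝ := fun g => ((2:ℝ)^n)⁻¹ * ((T * PauliOp n g).trace).re with hcdef
  have hcast : ((2:ℂ)^n) = (((2:ℝ)^n : ℝ) : ℂ) := by push_cast; ring
  have hctrace : ∀ g, ((2:ℂ)^n)⁻¹ * (T * PauliOp n g).trace = ((c g : ℝ) : ℂ) := by
    intro g
    rw [hcast, ← Complex.ofReal_inv]
    apply Complex.ext
    · simp only [hcdef, Complex.mul_re, Complex.ofReal_re, Complex.ofReal_im, zero_mul, sub_zero]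
    · simp only [Complex.mul_im, Complex.ofReal_re, Complex.ofReal_im, zero_mul, add_zero,
        hreal g, mul_zero, Complex.ofReal_im]
  have hexpand : T = ∑ g, ((c g : ℝ) : ℂ) • PauliOp n g := by
    conv_lhs => rw [pauli_expand T]
    exact Finset.sum_congr rfl fun g _ => by rw [hctrace g]
  -- bound on the coefficients
  have hcb : ∀ g, |c g| ≤ ((2:ℝ)^n)⁻¹ * 2 := by
    intro g
    have hsplit : (T * PauliOp n g).trace
        = (ρ * PauliOp n g).trace - ((2:ℂ)^n)⁻¹ * (PauliOp n g).trace := by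
      rw [hTdef, Matrix.sub_mul, Matrix.trace_sub, Matrix.smul_mul, Matrix.trace_smul,
        Matrix.one_mul, smul_eq_mul]
    have h1 : |((ρ * PauliOp n g).trace).re| ≤ 1 := trace_rho_P_bound hρ hρt (hPh g) (hPu g)
    have h2 : |(((2:ℂ)^n)⁻¹ * (PauliOp n g).trace).re| ≤ 1 := by
      rw [PauliOp_trace g]
      by_cases hg : g = (fun _ => 0)
      · rw [if_pos hg, inv_mul_cancel₀ h2n]
        norm_num
      · rw [if_neg hg, mul_zero]
        norm_num
    have : |c g| = ((2:ℝ)^n)⁻¹ * |((T * PauliOp n g).trace).re| := by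
      rw [hcdef, abs_mul, abs_of_pos (by positivity : (0:ℝ) < ((2:ℝ)^n)⁻¹)]
    rw [this, hsplit]
    have h3 : |((ρ * PauliOp n g).trace - ((2:ℂ)^n)⁻¹ * (PauliOp n g).trace).re| ≤ 2 := by
      rw [Complex.sub_re]
      calc |((ρ * PauliOp n g).trace).re - (((2:ℂ)^n)⁻¹ * (PauliOp n g).trace).re|
          ≤ |((ρ * PauliOp n g).trace).re| + |(((2:ℂ)^n)⁻¹ * (PauliOp n g).trace).re| :=
            abs_sub _ _
        _ ≤ 2 := by linarith
    have hpos : (0:ℝ) ≤ ((2:ℝ)^n)⁻¹ := by positivity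
    exact mul_le_mul_of_nonneg_left h3 hpos
  -- β coefficients
  set β := fun (g : Fin n → Fin 4) => ∑ P, α P * Sgn P g with hβdef
  have hβsum : ∑ g, β g ^ 2 = (4:ℝ)^n * ∑ P, α P ^ 2 := by
    have e1 : ∀ g, β g ^ 2 = ∑ P, ∑ Q, (α P * α Q) * (Sgn P g * Sgn Q g) := by
      intro g
      rw [hβdef, sq, Finset.sum_mul_sum]
      exact Finset.sum_congr rfl fun P _ => Finset.sum_congr rfl fun Q _ => by ring
    rw [Finset.sum_congr rfl fun g _ => e1 g, Finset.sum_comm]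
    have e2 : ∀ P, ∑ g, ∑ Q, (α P * α Q) * (Sgn P g * Sgn Q g)
        = ∑ Q, (α P * α Q) * ∑ g, Sgn P g * Sgn Q g := by
      intro P
      rw [Finset.sum_comm]
      exact Finset.sum_congr rfl fun Q _ => by rw [Finset.mul_sum]
    rw [Finset.sum_congr rfl fun P _ => e2 P]
    have e3 : ∀ P : Fin n → Fin 4, ∑ Q, (α P * α Q) * (if P = Q then (4:ℝ)^n else 0)
        = α P ^ 2 * 4 ^ n := by
      intro P
      rw [Finset.sum_eq_single P]
      · simp [sq]
      · intro Q _ hQ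
        rw [if_neg (fun h => hQ h.symm), mul_zero]
      · intro h
        exact absurd (Finset.mem_univ P) h
    rw [Finset.sum_congr rfl fun P _ => by rw [Finset.sum_congr rfl fun Q _ => by
      rw [Sgn_ortho P Q]]]
    rw [Finset.sum_congr rfl fun P _ => e3 P, Finset.mul_sum]
    exact Finset.sum_congr rfl fun P _ => by ring
  -- the operator B
  set B := ∑ P, ((α P : ℝ) : ℂ) • (PauliOp n P * T * PauliOp n P) with hBdef
  have hBh : Bᴴ = B := by
    rw [hBdef, Matrix.conjTranspose_sum]
    refine Finset.sum_congr rfl fun P _ => ?_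
    rw [Matrix.conjTranspose_smul, Matrix.conjTranspose_mul, Matrix.conjTranspose_mul,
      hPh P, hThm]
    rw [show star ((α P : ℝ) : ℂ) = ((α P : ℝ) : ℂ) from Complex.conj_ofReal _, mul_assoc]
  have hPTP : ∀ P, PauliOp n P * T * PauliOp n P
      = ∑ g, ((c g * Sgn P g : ℝ) : ℂ) • PauliOp n g := by
    intro P
    conv_lhs => rw [hexpand]
    rw [Finset.mul_sum, Finset.sum_mul]
    refine Finset.sum_congr rfl fun g _ => ?_
    rw [Matrix.mul_smul, Matrix.smul_mul, PauliOp_conj P g, smul_smul]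
    congr 1
    push_cast
    ring
  have hBg : B = ∑ g, ((β g * c g : ℝ) : ℂ) • PauliOp n g := by
    rw [hBdef, Finset.sum_congr rfl fun P _ => by rw [hPTP P]]
    rw [Finset.sum_congr rfl fun P (_ : P ∈ Finset.univ) => Finset.smul_sum]
    rw [Finset.sum_comm]
    refine Finset.sum_congr rfl fun g _ => ?_
    rw [Finset.sum_congr rfl fun P (_ : P ∈ Finset.univ) => smul_smul _ _ _,
      ← Finset.sum_smul]
    congr 1
    rw [hβdef]
    push_cast
    rw [Finset.sum_mul]
    exact Finset.sum_congr rfl fun P _ => by ring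
  have htrB : (B * B).trace = (((2:ℝ)^n * ∑ g, (β g * c g)^2 : ℝ) : ℂ) := by
    rw [hBg, Matrix.sum_mul, Matrix.trace_sum]
    have e4 : ∀ g, ((((β g * c g : ℝ) : ℂ) • PauliOp n g) *
          ∑ h, ((β h * c h : ℝ) : ℂ) • PauliOp n h).trace
        = ((β g * c g : ℝ) : ℂ)^2 * (2:ℂ)^n := by
      intro g
      rw [Matrix.mul_sum, Matrix.trace_sum]
      rw [Finset.sum_congr rfl fun h (_ : h ∈ Finset.univ) => by
        rw [Matrix.smul_mul, Matrix.mul_smul, smul_smul, Matrix.trace_smul, smul_eq_mul,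
          PauliOp_trace_mul g h]]
      simp only [mul_ite, mul_zero]
      rw [Finset.sum_ite_eq]
      simp only [Finset.mem_univ, if_true]
      ring
    rw [Finset.sum_congr rfl fun g _ => e4 g, ← Finset.sum_mul]
    push_cast
    ring
  -- the deviation sums equal the quadratic form of B
  have hw : ∀ i, ∑ P, α P * (star (φ i) ⬝ᵥ (PauliOp n P * T * PauliOp n P) *ᵥ φ i).re
      = (star (φ i) ⬝ᵥ B *ᵥ φ i).re := by
    intro i
    rw [hBdef, sum_mulVec', dotProduct_sum', Complex.re_sum]
    refine Finset.sum_congr rfl fun P _ => ?_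
    rw [Matrix.smul_mulVec, dotProduct_smul, smul_eq_mul, Complex.re_ofReal_mul]
  have hcs : ∀ i, ((star (φ i) ⬝ᵥ B *ᵥ φ i).re)^2
      ≤ (star (φ i) ⬝ᵥ (B * B) *ᵥ φ i).re := fun i => cs_step B hBh (φ i) (hφ i)
  have hpovm : ∑ i, lam i * (star (φ i) ⬝ᵥ (B * B) *ᵥ φ i).re = ((B * B).trace).re := by
    have e1 : ∀ i, lam i * (star (φ i) ⬝ᵥ (B * B) *ᵥ φ i).re
        = (((lam i : ℝ) : ℂ) * ((B * B) * Matrix.vecMulVec (φ i) (star (φ i))).trace).re := by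
      intro i
      rw [dot_eq_trace, Complex.re_ofReal_mul]
    rw [Finset.sum_congr rfl fun i _ => e1 i, ← Complex.re_sum]
    congr 1
    have e2 : ∑ i, ((lam i : ℝ) : ℂ) * ((B * B) * Matrix.vecMulVec (φ i) (star (φ i))).trace
        = ((B * B) * ∑ i, ((lam i : ℝ) : ℂ) • Matrix.vecMulVec (φ i) (star (φ i))).trace := by
      simp only [Matrix.mul_sum, Matrix.mul_smul, Matrix.trace_sum, Matrix.trace_smul,
        smul_eq_mul]
    rw [e2, hPOVM, mul_one]
  -- numerics
  set SA := ∑ P, α P ^ 2 with hSAdef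
  have hSApos : 0 < SA := by
    obtain ⟨P0, hP0⟩ := Function.ne_iff.mp hα
    refine Finset.sum_pos' (fun P _ => sq_nonneg _) ⟨P0, Finset.mem_univ P0, ?_⟩
    exact sq_pos_of_ne_zero hP0
  set k := 2 * ε / Real.sqrt SA with hkdef
  have hk2 : k ^ 2 = 4 * ε ^ 2 / SA := by
    rw [hkdef, div_pow, Real.sq_sqrt hSApos.le]
    ring
  have step1 : ∑ i, lam i *
        (k * ∑ P, α P * (star (φ i) ⬝ᵥ (PauliOp n P * T * PauliOp n P) *ᵥ φ i).re) ^ 2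
      = k ^ 2 * ∑ i, lam i * ((star (φ i) ⬝ᵥ B *ᵥ φ i).re) ^ 2 := by
    rw [Finset.mul_sum]
    exact Finset.sum_congr rfl fun i _ => by rw [hw i]; ring
  have step2 : ∑ i, lam i * ((star (φ i) ⬝ᵥ B *ᵥ φ i).re) ^ 2 ≤ ((B * B).trace).re := by
    rw [← hpovm]
    exact Finset.sum_le_sum fun i _ => mul_le_mul_of_nonneg_left (hcs i) (hlam i)
  have step3 : ((B * B).trace).re = (2:ℝ)^n * ∑ g, (β g * c g) ^ 2 := by
    rw [htrB, Complex.ofReal_re]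
  have step4 : ∑ g, (β g * c g) ^ 2 ≤ (((2:ℝ)^n)⁻¹ * 2) ^ 2 * ((4:ℝ)^n * SA) := by
    rw [← hβsum, Finset.mul_sum]
    refine Finset.sum_le_sum fun g _ => ?_
    have h2 : c g ^ 2 ≤ (((2:ℝ)^n)⁻¹ * 2) ^ 2 := by
      rw [← sq_abs (c g)]
      exact pow_le_pow_left₀ (abs_nonneg _) (hcb g) 2
    calc (β g * c g) ^ 2 = c g ^ 2 * β g ^ 2 := by ring
      _ ≤ (((2:ℝ)^n)⁻¹ * 2) ^ 2 * β g ^ 2 := mul_le_mul_of_nonneg_right h2 (sq_nonneg _)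
  have final : k ^ 2 * ((2:ℝ)^n * ((((2:ℝ)^n)⁻¹ * 2) ^ 2 * ((4:ℝ)^n * SA))) =
      16 * 2 ^ n * ε ^ 2 := by
    rw [hk2]
    have h4 : (4:ℝ)^n = ((2:ℝ)^n) ^ 2 := by
      rw [← pow_mul, mul_comm, pow_mul]
      norm_num
    rw [h4]
    field_simp
    ring
  refine le_trans (le_of_eq step1) ?_
  calc k ^ 2 * ∑ i, lam i * ((star (φ i) ⬝ᵥ B *ᵥ φ i).re) ^ 2
      ≤ k ^ 2 * ((B * B).trace).re :=
        mul_le_mul_of_nonneg_left step2 (sq_nonneg k)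
    _ = k ^ 2 * ((2:ℝ)^n * ∑ g, (β g * c g) ^ 2) := by rw [step3]
    _ ≤ k ^ 2 * ((2:ℝ)^n * ((((2:ℝ)^n)⁻¹ * 2) ^ 2 * ((4:ℝ)^n * SA))) := by
        refine mul_le_mul_of_nonneg_left ?_ (sq_nonneg k)
        exact mul_le_mul_of_nonneg_left step4 h2nR.le
    _ = 16 * 2 ^ n * ε ^ 2 := final
end

section
/- Let d ≥ 1, let ℐ be a finite set, let λ_i ≥ 0 and let φ_i ∈ ℂ^d be unit vectors (i ∈ ℐ) with Σ_{i∈ℐ} λ_i |φ_i⟩⟨φ_i| = I_d. Then for every Hermitian d×d complex matrix M, Σ_{i∈ℐ} λ_i · ⟨φ_i| M |φ_i⟩² ≤ tr(M²). -/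
open scoped Matrix

lemma trace_mul_vecMulVec {d : ℕ} (A : Matrix (Fin d) (Fin d) ℂ) (u v : Fin d → ℂ) :
    (A * Matrix.vecMulVec u v).trace = v ⬝ᵥ A.mulVec u := by
  simp only [Matrix.trace, Matrix.diag, Matrix.mul_apply, Matrix.vecMulVec_apply,
    dotProduct, Matrix.mulVec, Finset.mul_sum]
  apply Finset.sum_congr rfl; intro j _
  apply Finset.sum_congr rfl; intro k _
  ring

lemma EuclideanSpace.inner_piLp_equiv_symm {d : ℕ} (x y : Fin d → ℂ) :
    inner ℂ ((WithLp.equiv 2 _).symm x : EuclideanSpace ℂ (Fin d)) ((WithLp.equiv 2 _).symm y)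
      = star x ⬝ᵥ y :=
  (EuclideanSpace.inner_toLp_toLp x y).trans (dotProduct_comm _ _)

lemma cs_step_s14 {d : ℕ} (x y : Fin d → ℂ) (hx : star x ⬝ᵥ x = 1) :
    ((star x ⬝ᵥ y).re) ^ 2 ≤ (star y ⬝ᵥ y).re := by
  set X : EuclideanSpace ℂ (Fin d) := (WithLp.equiv 2 _).symm x with hXdef
  set Y : EuclideanSpace ℂ (Fin d) := (WithLp.equiv 2 _).symm y with hYdef
  have hinner : (inner ℂ X Y : ℂ) = star x ⬝ᵥ y :=
    EuclideanSpace.inner_piLp_equiv_symm x y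
  have hXX : (inner ℂ X X : ℂ) = 1 := by
    rw [hXdef, EuclideanSpace.inner_piLp_equiv_symm, hx]
  have hXX' : (inner ℂ X X : ℂ) = (‖X‖ : ℂ) ^ 2 := by
    exact_mod_cast inner_self_eq_norm_sq_to_K X
  have hnX : ‖X‖ = 1 := by
    have h1 : (‖X‖ : ℂ) ^ 2 = 1 := by rw [← hXX', hXX]
    have h2 : ‖X‖ ^ 2 = 1 := by exact_mod_cast h1
    nlinarith [norm_nonneg X]
  have hYY : (inner ℂ Y Y : ℂ) = (‖Y‖ : ℂ) ^ 2 := by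
    exact_mod_cast inner_self_eq_norm_sq_to_K Y
  have hy : (star y ⬝ᵥ y).re = ‖Y‖ ^ 2 := by
    have : (star y ⬝ᵥ y) = (‖Y‖ : ℂ) ^ 2 := by
      rw [← hYY, hYdef, EuclideanSpace.inner_piLp_equiv_symm]
    rw [this]
    simp [← Complex.ofReal_pow]
  have hcs : ‖(inner ℂ X Y : ℂ)‖ ≤ ‖X‖ * ‖Y‖ := norm_inner_le_norm X Y
  rw [hnX, one_mul] at hcs
  have hre : |(inner ℂ X Y : ℂ).re| ≤ ‖Y‖ := (Complex.abs_re_le_norm _).trans hcs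
  have : |(inner ℂ X Y : ℂ).re| ^ 2 ≤ ‖Y‖ ^ 2 :=
    pow_le_pow_left₀ (abs_nonneg _) hre 2
  rw [sq_abs] at this
  rw [hy, ← hinner]
  exact this

/-- for a rank-one POVM `{λ_i |φ_i⟩⟨φ_i|}` on `ℂ^d` summing to the identity
and a Hermitian matrix `M`, `∑_i λ_i ⟨φ_i|M|φ_i⟩² ≤ tr(M²)`. -/
theorem stmt_14 (d : ℕ) (hd : 1 ≤ d) {ι : Type*} [Fintype ι]
    (lam : ι → ℝ) (hlam : ∀ i, 0 ≤ lam i)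
    (φ : ι → Fin d → ℂ) (hφ : ∀ i, star (φ i) ⬝ᵥ φ i = 1)
    (hPOVM : ∑ i, (lam i : ℂ) • Matrix.vecMulVec (φ i) (star (φ i)) =
      (1 : Matrix (Fin d) (Fin d) ℂ))
    (M : Matrix (Fin d) (Fin d) ℂ) (hM : M.IsHermitian) :
    ∑ i, lam i * ((star (φ i) ⬝ᵥ M.mulVec (φ i)).re) ^ 2 ≤ ((M * M).trace).re := by
  have htr : (M * M).trace = ∑ i, (lam i : ℂ) * (star (φ i) ⬝ᵥ (M * M).mulVec (φ i)) := by
    calc (M * M).trace = ((M * M) * (1 : Matrix (Fin d) (Fin d) ℂ)).trace := by rw [mul_one]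
    _ = ((M * M) * ∑ i, (lam i : ℂ) • Matrix.vecMulVec (φ i) (star (φ i))).trace := by
        rw [hPOVM]
    _ = ∑ i, (lam i : ℂ) * (star (φ i) ⬝ᵥ (M * M).mulVec (φ i)) := by
        rw [Finset.mul_sum, Matrix.trace_sum]
        apply Finset.sum_congr rfl; intro i _
        rw [Matrix.mul_smul, Matrix.trace_smul, trace_mul_vecMulVec]
        simp [smul_eq_mul]
  have key : ∀ i, ((star (φ i) ⬝ᵥ M.mulVec (φ i)).re) ^ 2
      ≤ (star (φ i) ⬝ᵥ (M * M).mulVec (φ i)).re := by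
    intro i
    have h2 : star (φ i) ⬝ᵥ (M * M).mulVec (φ i)
        = star (M.mulVec (φ i)) ⬝ᵥ M.mulVec (φ i) := by
      rw [show M * M = Mᴴ * M from by rw [hM.eq]]
      calc star (φ i) ⬝ᵥ (Mᴴ * M).mulVec (φ i)
          = star (φ i) ⬝ᵥ Mᴴ.mulVec (M.mulVec (φ i)) := by rw [Matrix.mulVec_mulVec]
        _ = (Matrix.vecMul (star (φ i)) Mᴴ) ⬝ᵥ M.mulVec (φ i) :=
            Matrix.dotProduct_mulVec _ _ _
        _ = star (M.mulVec (φ i)) ⬝ᵥ M.mulVec (φ i) := by rw [Matrix.star_mulVec]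
    rw [h2]
    exact cs_step_s14 (φ i) (M.mulVec (φ i)) (hφ i)
  calc ∑ i, lam i * ((star (φ i) ⬝ᵥ M.mulVec (φ i)).re) ^ 2
      ≤ ∑ i, lam i * (star (φ i) ⬝ᵥ (M * M).mulVec (φ i)).re := by
        apply Finset.sum_le_sum
        intro i _
        exact mul_le_mul_of_nonneg_left (key i) (hlam i)
    _ = ((M * M).trace).re := by
        rw [htr, Complex.re_sum]
        apply Finset.sum_congr rfl; intro i _
        simp
end

section
/- For every n ≥ 1 there exist 2^n + 1 linear subspaces V₀, V₁, …, V_{2^n} of 𝔽₂^{2n}, each of dimension n and each totally isotropic with respect to the symplectic bilinear form ω((a,b),(a',b')) = a·b' + b·a' (where a, b, a', b' ∈ 𝔽₂^n and · is the standard dot product over 𝔽₂), such that V_i ∩ V_j = {0} for all i ≠ j. In particular, every nonzero vector of 𝔽₂^{2n} lies in exactly one of the V_i. -/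
/-- for every `n ≥ 1` there exist `2^n + 1` subspaces of `𝔽₂^{2n}`, each of
dimension `n` and totally isotropic for the symplectic form
`ω((a,b),(a',b')) = a·b' + b·a'`, pairwise intersecting trivially; in particular every
nonzero vector lies in exactly one of them. -/
theorem stmt_15 (n : ℕ) (hn : 1 ≤ n) :
    ∃ V : Fin (2 ^ n + 1) → Submodule (ZMod 2) ((Fin n → ZMod 2) × (Fin n → ZMod 2)),
      (∀ i, Module.finrank (ZMod 2) (V i) = n) ∧
      (∀ i, ∀ u ∈ V i, ∀ v ∈ V i,
        (∑ k, u.1 k * v.2 k) + (∑ k, u.2 k * v.1 k) = 0) ∧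
      (∀ i j, i ≠ j → V i ⊓ V j = ⊥) ∧
      (∀ v : (Fin n → ZMod 2) × (Fin n → ZMod 2), v ≠ 0 → ∃! i, v ∈ V i) := by
  haveI : Fact (Nat.Prime 2) := ⟨Nat.prime_two⟩
  have hn0 : n ≠ 0 := by omega
  set K := GaloisField 2 n with hK
  have hfr : Module.finrank (ZMod 2) K = n := GaloisField.finrank 2 hn0
  let b : Module.Basis (Fin n) (ZMod 2) K := Module.finBasisOfFinrankEq (ZMod 2) K hfr
  let e : K ≃ₗ[ZMod 2] (Fin n → ZMod 2) := b.equivFun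
  let f : K →ₗ[ZMod 2] (Fin n → ZMod 2) :=
    LinearMap.pi fun k => Algebra.traceForm (ZMod 2) K (b k)
  have key : ∀ x y : K,
      (∑ k, e x k * f y k) = Algebra.trace (ZMod 2) K (x * y) := by
    intro x y
    conv_rhs => rw [← b.sum_equivFun x]
    rw [Finset.sum_mul, map_sum]
    refine Finset.sum_congr rfl fun k _ => ?_
    rw [smul_mul_assoc, map_smul]
    simp [f, e, Algebra.traceForm_apply, smul_eq_mul, mul_comm]
  have hfinj : Function.Injective f := by
    rw [injective_iff_map_eq_zero]
    intro y hy
    apply (traceForm_nondegenerate (ZMod 2) K).1 y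
    intro x
    rw [Algebra.traceForm_apply, mul_comm y x, ← key x y, hy]
    simp
  have hfsurj : Function.Surjective f := by
    have hdim : Module.finrank (ZMod 2) K
        = Module.finrank (ZMod 2) (Fin n → ZMod 2) := by
      rw [hfr, Module.finrank_fin_fun]
    exact (LinearMap.injective_iff_surjective_of_finrank_eq_finrank hdim).mp hfinj
  -- the spread, indexed by `Option K`
  let g : Option K → (K →ₗ[ZMod 2] (Fin n → ZMod 2) × (Fin n → ZMod 2)) :=
    fun o => match o with
    | none => LinearMap.prod 0 f
    | some a => LinearMap.prod e.toLinearMap (f ∘ₗ LinearMap.mulLeft (ZMod 2) a)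
  have hgn : ∀ x, g none x = ((0 : Fin n → ZMod 2), f x) := fun x => rfl
  have hgs : ∀ a x, g (some a) x = (e x, f (a * x)) := fun a x => rfl
  have hginj : ∀ o, Function.Injective (g o) := by
    intro o
    cases o with
    | none =>
      intro x y hxy
      have : f x = f y := congrArg Prod.snd hxy
      exact hfinj this
    | some a =>
      intro x y hxy
      have : e x = e y := congrArg Prod.fst hxy
      exact e.injective this
  let W : Option K → Submodule (ZMod 2) ((Fin n → ZMod 2) × (Fin n → ZMod 2)) :=
    fun o => LinearMap.range (g o)
  -- pairwise trivial intersections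
  have hdisj : ∀ o o', o ≠ o' → W o ⊓ W o' = ⊥ := by
    intro o o' hne
    rw [eq_bot_iff]
    rintro p ⟨⟨x, hx⟩, ⟨y, hy⟩⟩
    simp only [Submodule.mem_bot]
    cases o with
    | none =>
      cases o' with
      | none => exact absurd rfl hne
      | some a =>
        rw [hgn] at hx; rw [hgs] at hy
        have h1 : e y = 0 := by
          have := congrArg Prod.fst (hy.trans hx.symm); simpa using this
        have hy0 : y = 0 := by
          have := e.injective (h1.trans (map_zero e).symm); exact this
        rw [← hy, hy0]; simp
    | some a =>
      cases o' with
      | none =>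
        rw [hgs] at hx; rw [hgn] at hy
        have h1 : e x = 0 := by
          have := congrArg Prod.fst (hx.trans hy.symm); simpa using this
        have hx0 : x = 0 := e.injective (h1.trans (map_zero e).symm)
        rw [← hx, hx0]; simp
      | some a' =>
        have haa : a ≠ a' := by rintro rfl; exact hne rfl
        rw [hgs] at hx hy
        have h1 : e x = e y := by
          have := congrArg Prod.fst (hx.trans hy.symm); simpa using this
        have hxy : x = y := e.injective h1
        subst hxy
        have h2 : f (a * x) = f (a' * x) := by
          have := congrArg Prod.snd (hx.trans hy.symm); simpa using this
        have h3 : a * x = a' * x := hfinj h2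
        have hx0 : x = 0 := by
          by_contra hx0
          exact haa (mul_right_cancel₀ hx0 h3)
        rw [← hx, hx0]; simp
  haveI : Fintype K := Fintype.ofFinite K
  have hcard : Fintype.card K = 2 ^ n := by
    rw [← Nat.card_eq_fintype_card]; exact GaloisField.card 2 n hn0
  let σ : Fin (2 ^ n + 1) ≃ Option K :=
    (finSuccEquiv (2 ^ n)).trans
      (Equiv.optionCongr ((Fintype.equivFinOfCardEq hcard).symm))
  refine ⟨fun i => W (σ i), ?_, ?_, ?_, ?_⟩
  · -- dimensions
    intro i
    rw [LinearMap.finrank_range_of_inj (hginj _), hfr]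
  · -- isotropy
    intro i u hu v hv
    obtain ⟨x, hx⟩ := hu
    obtain ⟨y, hy⟩ := hv
    cases h : σ i with
    | none =>
      rw [h, hgn] at hx hy
      rw [← hx, ← hy]
      simp
    | some a =>
      rw [h, hgs] at hx hy
      rw [← hx, ← hy]
      simp only
      rw [key x (a * y)]
      have : (∑ k, f (a * x) k * e y k) = ∑ k, e y k * f (a * x) k := by
        refine Finset.sum_congr rfl fun k _ => mul_comm _ _
      rw [this, key y (a * x)]
      have hxy : x * (a * y) = y * (a * x) := by ring
      rw [hxy]
      exact CharTwo.add_self_eq_zero _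
  · -- pairwise trivial intersection
    intro i j hij
    exact hdisj _ _ (fun h => hij (Equiv.injective _ h))
  · -- covering
    intro v hv
    have hex : ∃ o, v ∈ W o := by
      by_cases h1 : v.1 = 0
      · obtain ⟨y, hy⟩ := hfsurj v.2
        exact ⟨none, y, by rw [hgn]; rw [hy, ← h1]⟩
      · have hx0 : e.symm v.1 ≠ 0 := by
          intro h; apply h1
          have := congrArg e h
          rw [e.apply_symm_apply, map_zero] at this; exact this
        obtain ⟨y, hy⟩ := hfsurj v.2
        refine ⟨some (y * (e.symm v.1)⁻¹), e.symm v.1, ?_⟩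
        rw [hgs]
        have : y * (e.symm v.1)⁻¹ * e.symm v.1 = y := by
          exact inv_mul_cancel_right₀ hx0 y
        rw [this, hy, e.apply_symm_apply]
    obtain ⟨o, ho⟩ := hex
    refine ⟨σ.symm o, ?_, ?_⟩
    · show v ∈ W (σ (σ.symm o))
      rw [σ.apply_symm_apply]; exact ho
    · intro j hj
      have : σ j = o := by
        by_contra hne
        have := hdisj _ _ hne
        have hvb : v ∈ W (σ j) ⊓ W o := ⟨hj, ho⟩
        rw [this] at hvb
        exact hv hvb
      rw [← this, σ.symm_apply_apply]
end

section
/- For every n ≥ 1 there exist symmetric matrices B₁, …, Bₙ ∈ M_n(𝔽₂) such that for every nonzero α = (α₁, …, αₙ) ∈ 𝔽₂ⁿ, the matrix Σ_{i=1}^n α_i B_i is invertible (has nonzero determinant over 𝔽₂). -/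
/-- for every `n ≥ 1` there exist symmetric matrices `B₁, …, Bₙ` over `𝔽₂`
such that every nonzero `𝔽₂`-linear combination `∑ α_i B_i` has nonzero determinant. -/
theorem stmt_16 (n : ℕ) (hn : 1 ≤ n) :
    ∃ B : Fin n → Matrix (Fin n) (Fin n) (ZMod 2),
      (∀ i, (B i).IsSymm) ∧
      ∀ α : Fin n → ZMod 2, α ≠ 0 → (∑ i, α i • B i).det ≠ 0 := by
  haveI : Fact (Nat.Prime 2) := ⟨Nat.prime_two⟩
  set K := GaloisField 2 n
  have hfr : Module.finrank (ZMod 2) K = n := GaloisField.finrank 2 (by omega)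
  let b : Module.Basis (Fin n) (ZMod 2) K := Module.finBasisOfFinrankEq (ZMod 2) K hfr
  refine ⟨fun k => Matrix.of fun i j => b.repr (b i * b j) k, ?_, ?_⟩
  · intro k
    ext i j
    simp [Matrix.transpose_apply, mul_comm]
  · intro α hα
    -- the linear functional L = ∑ α k • b.coord k
    let L : K →ₗ[ZMod 2] (ZMod 2) := ∑ k, α k • b.coord k
    have hLb : ∀ x : K, L x = ∑ k, α k * b.repr x k := by
      intro x
      simp [L, LinearMap.sum_apply, Module.Basis.coord_apply]
    have hL : L ≠ 0 := by
      intro h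
      apply hα
      funext j
      have := congrArg (fun f => f (b j)) h
      simpa [hLb, Module.Basis.repr_self, Finsupp.single_apply, Finset.sum_ite_eq'] using this
    -- bilinear form B(x,y) = L (x*y)
    let Bf : LinearMap.BilinForm (ZMod 2) K := (LinearMap.mul (ZMod 2) K).compr₂ L
    have hBf : Bf.Nondegenerate := by
      refine LinearMap.BilinForm.Nondegenerate.ofSeparatingLeft ?_
      intro x hx
      by_contra hx0
      apply hL
      ext z
      have := hx (x⁻¹ * z)
      simp only [Bf, LinearMap.compr₂_apply, LinearMap.mul_apply'] at this
      rw [← mul_assoc, mul_inv_cancel₀ hx0, one_mul] at this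
      simpa using this
    have hdet := (LinearMap.BilinForm.nondegenerate_iff_det_ne_zero b).mp hBf
    convert hdet using 2
    ext i j
    simp only [Finset.sum_apply, Matrix.sum_apply, Matrix.smul_apply, Matrix.of_apply,
      BilinForm.toMatrix_apply, smul_eq_mul]
    show _ = Bf (b i) (b j)
    simp [Bf, hLb]
end
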